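/- arXiv:2105.08373 — 6 statements merged into one kernel-verified Lean document; each statement's English description precedes it below -/
import Mathlib

section
/- Let (𝒳₀,𝒳₁) be a compatible couple of sequentially structured Banach spaces and let θ ∈ (0,1). For x ∈ X₀+X₁ set ‖x‖^{(m)}_{(𝒳₀,𝒳₁)_θ} := inf (‖x⃗⁰‖_{𝔖₀(e^{−θ})} + ‖x⃗¹‖_{𝔖₁(e^{1−θ})}), the infimum over all x⃗⁰ ∈ 𝔖₀(e^{−θ}) and x⃗¹ ∈ 𝔖₁(e^{1−θ}) such that x = x⁰_k + x¹_k for every k ∈ ℤ; equivalently ‖x‖^{(m)}_{(𝒳₀,𝒳₁)_θ} = ‖(…,x,x,x,…)‖_{𝔖₀(e^{−θ}) + 𝔖₁(e^{1−θ})}. Then (𝒳₀,𝒳₁)_θ = {x ∈ X₀+X₁ : ‖x‖^{(m)}_{(𝒳₀,𝒳₁)_θ} < ∞}, and ‖·‖^{(m)}_{(𝒳₀,𝒳₁)_θ} is an equivalent norm on (𝒳₀,𝒳₁)_θ, with equivalence constants depending only on θ. -/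
open scoped ENNReal NNReal
open Filter Topology

universe u v

/-- The axioms of a complete ("Banach") extended norm on a module over a normed field:
definiteness, the triangle inequality, homogeneity, and completeness of the finiteness
domain.  A Banach space continuously embedded into an ambient space `E` is encoded as such
an extended norm on `E`; the Banach space itself is the finiteness domain. -/
def IsBanachENorm (𝕜 : Type*) {E : Type*} [NormedField 𝕜] [AddCommGroup E] [Module 𝕜 E]
    (N : E → ℝ≥0∞) : Prop :=
  (∀ x : E, N x = 0 → x = 0) ∧
  (∀ x y : E, N (x + y) ≤ N x + N y) ∧
  (∀ (c : 𝕜) (x : E), N (c • x) ≤ (‖c‖₊ : ℝ≥0∞) * N x) ∧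
  (∀ f : ℕ → E, (∀ n, N (f n) ≠ ∞) →
    (∀ ε : ℝ≥0∞, 0 < ε → ∃ n₀ : ℕ, ∀ m, n₀ ≤ m → ∀ n, n₀ ≤ n → N (f m - f n) < ε) →
    ∃ x : E, N x ≠ ∞ ∧ Filter.Tendsto (fun n => N (f n - x)) Filter.atTop (nhds 0))

/-- A Banach space continuously embedded into the ambient space `E`, encoded as a complete
extended norm on `E`. -/
structure BanachENorm (𝕜 : Type*) (E : Type*) [NormedField 𝕜] [AddCommGroup E]
    [Module 𝕜 E] where
  toFun : E → ℝ≥0∞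
  isBanachENorm : IsBanachENorm 𝕜 toFun

/-- A sequence structure `𝔖` on the Banach space `X`: a Banach space of `X`-valued sequences
which is translation invariant, contains the single-entry sequences isometrically, and has
contractive coordinate projections. -/
structure SeqStructure (𝕜 : Type*) (E : Type*) [NormedField 𝕜] [AddCommGroup E] [Module 𝕜 E]
    (X : BanachENorm 𝕜 E) where
  toFun : (ℤ → E) → ℝ≥0∞
  isBanachENorm : IsBanachENorm 𝕜 toFun
  single : ∀ (v : E) (n : ℤ), toFun (fun k => if k = n then v else 0) = X.toFun v
  shift : ∀ (x : ℤ → E) (n : ℤ), toFun (fun k => x (k + n)) = toFun x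
  coord : ∀ (x : ℤ → E) (n : ℤ), X.toFun (x n) ≤ toFun x

/-- The `n`-th Cesàro mean `C_n x⃗ = (n+1)⁻¹ ∑_{m=0}^{n} x⃗⁽ᵐ⁾`, where `x⃗⁽ᵐ⁾` is the
truncation of `x⃗` to the indices `|k| ≤ m`. -/
noncomputable def cesaro (𝕜 : Type*) {E : Type*} [NormedField 𝕜] [AddCommGroup E]
    [Module 𝕜 E] (n : ℕ) (x : ℤ → E) : ℤ → E :=
  fun k => (n + 1 : 𝕜)⁻¹ • ∑ m ∈ Finset.range (n + 1), (if |k| ≤ (m : ℤ) then x k else 0)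

/-- An `ℓ∞`-sequence structure: the Cesàro operators are contractive. -/
def IsLinftySeqStructure {𝕜 E : Type*} [NormedField 𝕜] [AddCommGroup E] [Module 𝕜 E]
    {X : BanachENorm 𝕜 E} (S : SeqStructure 𝕜 E X) : Prop :=
  ∀ (n : ℕ) (x : ℤ → E), S.toFun (cesaro 𝕜 n x) ≤ S.toFun x

/-- A `c₀`-sequence structure: the Cesàro operators are contractive and `C_n x⃗ → x⃗` in `𝔖`
for every `x⃗ ∈ 𝔖`. -/
def IsC0SeqStructure {𝕜 E : Type*} [NormedField 𝕜] [AddCommGroup E] [Module 𝕜 E]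
    {X : BanachENorm 𝕜 E} (S : SeqStructure 𝕜 E X) : Prop :=
  IsLinftySeqStructure S ∧
    ∀ x : ℤ → E, S.toFun x ≠ ∞ →
      Filter.Tendsto (fun n => S.toFun (cesaro 𝕜 n x - x)) Filter.atTop (nhds 0)

/-- The extended norm of the sum of two extended-normed spaces. -/
noncomputable def enSum {V : Type*} [AddCommGroup V] (N M : V → ℝ≥0∞) : V → ℝ≥0∞ :=
  fun v => ⨅ w : V, N w + M (v - w)

/-- The extended norm of the intersection of two extended-normed spaces. -/
def enInter {V : Type*} (N M : V → ℝ≥0∞) : V → ℝ≥0∞ := fun v => max (N v) (M v)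

/-- The weighted sequence space `𝔖(a)`, `‖x⃗‖_{𝔖(a)} = ‖(a^k x_k)_k‖_𝔖`. -/
noncomputable def wtSeq {E : Type*} [AddCommGroup E] [Module ℝ E] (a : ℝ)
    (S : (ℤ → E) → ℝ≥0∞) : (ℤ → E) → ℝ≥0∞ :=
  fun x => S fun k => (a ^ k) • x k

/-- The sequentially structured interpolation extended norm with base number `b`:
`‖v‖_{(𝒳₀,𝒳₁)_{θ;b}} = inf { max_{j=0,1} ‖(b^{k(j-θ)} x_k)_k‖_{𝔖_j} : ∑_k x_k = v }`,
the sum converging in the sum space `X₀ + X₁` (the ambient space `E`). -/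
noncomputable def interpENormB {E : Type*} [NormedAddCommGroup E] [NormedSpace ℝ E] (b : ℝ)
    (S₀ S₁ : (ℤ → E) → ℝ≥0∞) (θ : ℝ) (v : E) : ℝ≥0∞ :=
  ⨅ (x : ℤ → E) (_ : HasSum x v),
    max (wtSeq (b ^ (-θ)) S₀ x) (wtSeq (b ^ (1 - θ)) S₁ x)

/-- The sequentially structured interpolation extended norm (base number `e`). -/
noncomputable def interpENorm {E : Type*} [NormedAddCommGroup E] [NormedSpace ℝ E]
    (S₀ S₁ : (ℤ → E) → ℝ≥0∞) (θ : ℝ) (v : E) : ℝ≥0∞ :=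
  ⨅ (x : ℤ → E) (_ : HasSum x v),
    max (wtSeq (Real.exp (-θ)) S₀ x) (wtSeq (Real.exp (1 - θ)) S₁ x)

/-- The mean-method formulation of the interpolation norm. -/
noncomputable def meanENorm {E : Type*} [AddCommGroup E] [Module ℝ E]
    (S₀ S₁ : (ℤ → E) → ℝ≥0∞) (θ : ℝ) (v : E) : ℝ≥0∞ :=
  ⨅ (x0 : ℤ → E) (x1 : ℤ → E) (_ : ∀ k : ℤ, x0 k + x1 k = v),
    wtSeq (Real.exp (-θ)) S₀ x0 + wtSeq (Real.exp (1 - θ)) S₁ x1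

/-- The dual extended norm on linear functionals. -/
noncomputable def dualENorm {E : Type*} [AddCommGroup E] [Module ℝ E] (N : E → ℝ≥0∞)
    (φ : E →ₗ[ℝ] ℝ) : ℝ≥0∞ :=
  ⨆ (x : E) (_ : N x ≤ 1), (‖φ x‖₊ : ℝ≥0∞)

/-- The dual sequence norm, via the pairing `⟨x⃗, x⃗*⟩ = ∑_k ⟨x_k, x*_k⟩`. -/
noncomputable def dualSeqENorm {E : Type*} [AddCommGroup E] [Module ℝ E]
    (S : (ℤ → E) → ℝ≥0∞) (Φ : ℤ → E →ₗ[ℝ] ℝ) : ℝ≥0∞ :=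
  ⨆ (x : ℤ → E) (_ : (Function.support x).Finite) (_ : S x ≤ 1),
    (‖∑ᶠ k : ℤ, Φ k (x k)‖₊ : ℝ≥0∞)

/-- The interpolation norm of the dual couple `(𝒳₀*,𝒳₁*)_θ`
(in its mean-method formulation). -/
noncomputable def dualInterpMean {E : Type*} [AddCommGroup E] [Module ℝ E]
    (S₀ S₁ : (ℤ → E) → ℝ≥0∞) (θ : ℝ) (φ : E →ₗ[ℝ] ℝ) : ℝ≥0∞ :=
  ⨅ (Φ₀ : ℤ → E →ₗ[ℝ] ℝ) (Φ₁ : ℤ → E →ₗ[ℝ] ℝ) (_ : ∀ k : ℤ, Φ₀ k + Φ₁ k = φ),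
    wtSeq (Real.exp (-θ)) (dualSeqENorm S₀) Φ₀ +
      wtSeq (Real.exp (1 - θ)) (dualSeqENorm S₁) Φ₁

/-- Membership in the closure, inside the space with extended norm `Nj`, of the space with
extended norm `N`. -/
def memClosIn {E : Type*} [AddCommGroup E] (Nj N : E → ℝ≥0∞) (w : E) : Prop :=
  Nj w ≠ ∞ ∧ ∀ ε : ℝ≥0∞, 0 < ε → ∃ u : E, N u ≠ ∞ ∧ Nj (w - u) < ε

open Classical in
/-- The extended norm of the closure, inside the space with extended norm `Nj`, of the
space with extended norm `N`. -/
noncomputable def closENorm {E : Type*} [AddCommGroup E] (Nj N : E → ℝ≥0∞) : E → ℝ≥0∞ :=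
  fun w => if memClosIn Nj N w then Nj w else ∞

/-- Membership in `𝔖^∘`, the closure in `𝔖` of the finitely nonzero sequences with entries
in the closure of the `N`-space inside the `Nj`-space. -/
def memSeqClos {E : Type*} [AddCommGroup E] (S : (ℤ → E) → ℝ≥0∞) (Nj N : E → ℝ≥0∞)
    (x : ℤ → E) : Prop :=
  S x ≠ ∞ ∧ ∀ ε : ℝ≥0∞, 0 < ε → ∃ y : ℤ → E,
    (Function.support y).Finite ∧ (∀ k, memClosIn Nj N (y k)) ∧ S (x - y) < ε

open Classical in
/-- The extended norm of `𝔖^∘`. -/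
noncomputable def seqClosENorm {E : Type*} [AddCommGroup E] (S : (ℤ → E) → ℝ≥0∞)
    (Nj N : E → ℝ≥0∞) : (ℤ → E) → ℝ≥0∞ :=
  fun x => if memSeqClos S Nj N x then S x else ∞

/-- The `(𝔖,𝔗)`-bound of an operator. -/
noncomputable def seqOpENorm {E F : Type*} [AddCommGroup E] [Module ℝ E]
    [AddCommGroup F] [Module ℝ F] (S : (ℤ → E) → ℝ≥0∞) (T : (ℤ → F) → ℝ≥0∞)
    (A : E →ₗ[ℝ] F) : ℝ≥0∞ :=
  ⨆ (x : ℤ → E) (_ : S x ≤ 1), T fun k => A (x k)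

/-- The open strip `𝕊 = {0 < Re z < 1}`. -/
def openStrip : Set ℂ := {z : ℂ | 0 < z.re ∧ z.re < 1}

/-- The closed strip `S̄ = {0 ≤ Re z ≤ 1}`. -/
def closedStrip : Set ℂ := {z : ℂ | 0 ≤ z.re ∧ z.re ≤ 1}

/-- The `k`-th Fourier coefficient of the `2π`-periodic function `t ↦ f (s + it)`. -/
noncomputable def fourierCoef {X : Type*} [NormedAddCommGroup X] [NormedSpace ℂ X]
    (f : ℂ → X) (s : ℝ) (k : ℤ) : X :=
  (2 * (Real.pi : ℂ))⁻¹ • ∫ t in (-Real.pi)..Real.pi,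
    Complex.exp (-(k : ℂ) * Complex.I * (t : ℂ)) • f ((s : ℂ) + (t : ℂ) * Complex.I)

/-- The lower complex formulation norm `‖·‖^{(c)}_{(𝒳₀,𝒳₁)_θ}`. -/
noncomputable def lowerCNorm {E : Type*} [NormedAddCommGroup E] [NormedSpace ℂ E]
    (S₀ S₁ : (ℤ → E) → ℝ≥0∞) (θ : ℝ) (v : E) : ℝ≥0∞ :=
  ⨅ (f : ℂ → E) (_ : ContinuousOn f closedStrip)
    (_ : ∀ z ∈ openStrip, DifferentiableAt ℂ f z)
    (_ : ∀ z ∈ closedStrip, f (z + 2 * (Real.pi : ℂ) * Complex.I) = f z)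
    (_ : f (θ : ℂ) = v),
    max (S₀ fun k => fourierCoef f 0 k) (S₁ fun k => fourierCoef f 1 k)


section AuxLemmas

variable {V : Type*} [AddCommGroup V] [Module ℝ V] {N : V → ℝ≥0∞}

lemma ben_zero (h : IsBanachENorm ℝ N) : N 0 = 0 := by
  have := h.2.2.1 0 0
  simpa using this

lemma ben_smul_eq (h : IsBanachENorm ℝ N) {c : ℝ} (hc : c ≠ 0) (x : V) :
    N (c • x) = (‖c‖₊ : ℝ≥0∞) * N x := by
  refine le_antisymm (h.2.2.1 c x) ?_
  have h2 := h.2.2.1 c⁻¹ (c • x)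
  rw [inv_smul_smul₀ hc] at h2
  calc (‖c‖₊ : ℝ≥0∞) * N x ≤ (‖c‖₊ : ℝ≥0∞) * ((‖c⁻¹‖₊ : ℝ≥0∞) * N (c • x)) :=
        mul_le_mul_right h2 _
    _ = ((‖c‖₊ * ‖c⁻¹‖₊ : ℝ≥0) : ℝ≥0∞) * N (c • x) := by
        rw [ENNReal.coe_mul, mul_assoc]
    _ = N (c • x) := by
        rw [← nnnorm_mul, mul_inv_cancel₀ hc]; simp

lemma ben_neg (h : IsBanachENorm ℝ N) (x : V) : N (-x) = N x := by
  have := ben_smul_eq h (c := -1) (by norm_num) x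
  simpa using this

lemma ben_sub_le (h : IsBanachENorm ℝ N) (x y : V) : N (x - y) ≤ N x + N y := by
  rw [sub_eq_add_neg]
  exact (h.2.1 x (-y)).trans (by rw [ben_neg h])

lemma ben_sum_le (h : IsBanachENorm ℝ N) {ι : Type*} (s : Finset ι) (f : ι → V) :
    N (∑ m ∈ s, f m) ≤ ∑ m ∈ s, N (f m) := by
  classical
  induction s using Finset.induction_on with
  | empty => simp [ben_zero h]
  | insert _ _ hm ih =>
    rw [Finset.sum_insert hm, Finset.sum_insert hm]
    exact (h.2.1 _ _).trans (add_le_add_right ih _)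

lemma ben_series (h : IsBanachENorm ℝ N) (f : ℕ → V) (c : ℕ → ℝ≥0∞)
    (hc : ∀ n, N (f n) ≤ c n) (hfin : ∑' n, c n ≠ ∞) :
    ∃ g : V, N g ≤ ∑' n, c n ∧
      Tendsto (fun n => N ((∑ m ∈ Finset.range n, f m) - g)) atTop (𝓝 0) := by
  set F : ℕ → V := fun n => ∑ m ∈ Finset.range n, f m with hF
  have hFle : ∀ n, N (F n) ≤ ∑' m, c m := fun n =>
    (ben_sum_le h (Finset.range n) f).trans ((Finset.sum_le_sum fun m _ => hc m).trans
      (ENNReal.sum_le_tsum _))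
  have htail : Tendsto (fun n => ∑' k, c (k + n)) atTop (𝓝 0) :=
    ENNReal.tendsto_sum_nat_add c hfin
  have hdiff : ∀ m n : ℕ, n ≤ m → N (F m - F n) ≤ ∑' k, c (k + n) := by
    intro m n hnm
    have e : F m - F n = ∑ k ∈ Finset.Ico n m, f k := by
      rw [hF, ← Finset.sum_Ico_eq_sub _ hnm]
    rw [e]
    refine (ben_sum_le h (Finset.Ico n m) f).trans ?_
    calc ∑ k ∈ Finset.Ico n m, N (f k) ≤ ∑ k ∈ Finset.Ico n m, c k :=
          Finset.sum_le_sum fun k _ => hc k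
      _ = ∑ k ∈ Finset.range (m - n), c (n + k) := by
          rw [Finset.sum_Ico_eq_sum_range]
      _ ≤ ∑' k, c (n + k) := ENNReal.sum_le_tsum _
      _ = ∑' k, c (k + n) := by simp [add_comm]
  have hcauchy : ∀ ε : ℝ≥0∞, 0 < ε → ∃ n₀ : ℕ, ∀ m, n₀ ≤ m → ∀ n, n₀ ≤ n →
      N (F m - F n) < ε := by
    intro ε hε
    obtain ⟨n₀, hn₀⟩ := (htail.eventually_lt_const hε).exists_forall_of_atTop
    refine ⟨n₀, fun m hm n hn => ?_⟩
    rcases le_total n m with hnm | hmn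
    · exact lt_of_le_of_lt (hdiff m n hnm) (hn₀ n hn)
    · rw [← ben_neg h, neg_sub]
      exact lt_of_le_of_lt (hdiff n m hmn) (hn₀ m hm)
  obtain ⟨g, hg, hlim⟩ := h.2.2.2 F (fun n => ne_top_of_le_ne_top hfin (hFle n)) hcauchy
  refine ⟨g, ?_, hlim⟩
  refine ENNReal.le_of_forall_pos_le_add fun ε hε hlt => ?_
  obtain ⟨n, hn⟩ := (hlim.eventually_lt_const
    (show (0:ℝ≥0∞) < ε by exact_mod_cast hε)).exists
  calc N g ≤ N (F n) + N (g - F n) := by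
        have := h.2.1 (F n) (g - F n); simpa using this
    _ ≤ ∑' m, c m + N (F n - g) := by
        rw [← ben_neg h (F n - g), neg_sub]; exact add_le_add (hFle n) le_rfl
    _ ≤ ∑' m, c m + ε := add_le_add le_rfl hn.le

variable {E : Type*} [NormedAddCommGroup E] [NormedSpace ℝ E]

lemma wt_shift {X : BanachENorm ℝ E} (S : SeqStructure ℝ E X) {a : ℝ} (ha : 0 < a)
    (x : ℤ → E) (m : ℤ) :
    S.toFun (fun k => a ^ k • x (k + m)) = (‖a ^ (-m)‖₊ : ℝ≥0∞) * wtSeq a S.toFun x := by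
  have hne : a ≠ 0 := ne_of_gt ha
  have e1 : (fun k : ℤ => a ^ k • x (k + m)) =
      (a ^ (-m)) • (fun k : ℤ => a ^ (k + m) • x (k + m)) := by
    funext k
    rw [Pi.smul_apply, smul_smul, ← zpow_add₀ hne, show -m + (k + m) = k by ring]
  have e2 : S.toFun (fun k : ℤ => a ^ (k + m) • x (k + m))
      = S.toFun (fun j : ℤ => a ^ j • x j) := S.shift (fun j : ℤ => a ^ j • x j) m
  rw [e1, ben_smul_eq S.isBanachENorm (zpow_ne_zero _ hne), e2]
  rfl

lemma en_norm_le_left {N₀ N₁ : BanachENorm ℝ E}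
    (hN : ∀ v : E, enSum N₀.toFun N₁.toFun v = (‖v‖₊ : ℝ≥0∞)) (w : E) :
    (‖w‖₊ : ℝ≥0∞) ≤ N₀.toFun w := by
  rw [← hN w]
  refine iInf_le_of_le w ?_
  simp [ben_zero N₁.isBanachENorm]

lemma en_norm_le_right {N₀ N₁ : BanachENorm ℝ E}
    (hN : ∀ v : E, enSum N₀.toFun N₁.toFun v = (‖v‖₊ : ℝ≥0∞)) (w : E) :
    (‖w‖₊ : ℝ≥0∞) ≤ N₁.toFun w := by
  rw [← hN w]
  refine iInf_le_of_le 0 ?_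
  simp [ben_zero N₀.isBanachENorm]

lemma tendsto_of_ennnorm {α : Type*} {l : Filter α} {f : α → E} {g : E}
    (h : Tendsto (fun n => ((‖f n - g‖₊ : ℝ≥0∞))) l (𝓝 0)) : Tendsto f l (𝓝 g) := by
  rw [tendsto_iff_norm_sub_tendsto_zero]
  have h1 : Tendsto (fun n => (‖f n - g‖₊ : ℝ≥0)) l (𝓝 0) := by
    rw [show (0:ℝ≥0∞) = ((0:ℝ≥0):ℝ≥0∞) by simp] at h
    exact ENNReal.tendsto_coe.mp h
  simpa using NNReal.tendsto_coe.mpr h1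

lemma ennreal_squeeze_zero {α : Type*} {l : Filter α} {f g : α → ℝ≥0∞}
    (hle : ∀ n, f n ≤ g n) (hg : Tendsto g l (𝓝 0)) : Tendsto f l (𝓝 0) :=
  tendsto_of_tendsto_of_tendsto_of_le_of_le tendsto_const_nhds hg (fun n => zero_le) hle

lemma direction2 {N₀ N₁ : BanachENorm ℝ E} (S₀ : SeqStructure ℝ E N₀)
    (S₁ : SeqStructure ℝ E N₁) {θ : ℝ} (hθ : θ ∈ Set.Ioo (0 : ℝ) 1)
    (hN : ∀ v : E, enSum N₀.toFun N₁.toFun v = (‖v‖₊ : ℝ≥0∞)) (v : E)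
    (x0 x1 : ℤ → E) (hsplit : ∀ k : ℤ, x0 k + x1 k = v)
    (hB₀ : wtSeq (Real.exp (-θ)) S₀.toFun x0 ≠ ∞)
    (hB₁ : wtSeq (Real.exp (1 - θ)) S₁.toFun x1 ≠ ∞) :
    interpENorm S₀.toFun S₁.toFun θ v ≤
      (1 + ENNReal.ofReal (Real.exp 1)) *
        (wtSeq (Real.exp (-θ)) S₀.toFun x0 + wtSeq (Real.exp (1 - θ)) S₁.toFun x1) := by
  obtain ⟨hθ0, hθ1⟩ := hθ
  set a := Real.exp (-θ) with ha_def
  set b := Real.exp (1 - θ) with hb_def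
  have ha : 0 < a := Real.exp_pos _
  have hb : 0 < b := Real.exp_pos _
  have ha1 : a < 1 := by rw [ha_def]; exact Real.exp_lt_one_iff.2 (by linarith)
  have hb1 : 1 < b := by rw [hb_def]; exact Real.one_lt_exp_iff.2 (by linarith)
  have hbinv : b⁻¹ < 1 := inv_lt_one_of_one_lt₀ hb1
  set B₀ := wtSeq a S₀.toFun x0 with hB0_def
  set B₁ := wtSeq b S₁.toFun x1 with hB1_def
  set β₀ := B₀.toReal with hβ₀_def
  set β₁ := B₁.toReal with hβ₁_def
  have hx0r : ∀ k : ℤ, a ^ k * ‖x0 k‖ ≤ β₀ := by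
    intro k
    have h1 : (‖a ^ k • x0 k‖₊ : ℝ≥0∞) ≤ B₀ :=
      (en_norm_le_left hN _).trans (S₀.coord _ k)
    have h2 := ENNReal.toReal_mono hB₀ h1
    rwa [ENNReal.coe_toReal, coe_nnnorm, norm_smul, Real.norm_eq_abs,
      abs_of_pos (zpow_pos ha k)] at h2
  have hx1r : ∀ k : ℤ, b ^ k * ‖x1 k‖ ≤ β₁ := by
    intro k
    have h1 : (‖b ^ k • x1 k‖₊ : ℝ≥0∞) ≤ B₁ :=
      (en_norm_le_right hN _).trans (S₁.coord _ k)
    have h2 := ENNReal.toReal_mono hB₁ h1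
    rwa [ENNReal.coe_toReal, coe_nnnorm, norm_smul, Real.norm_eq_abs,
      abs_of_pos (zpow_pos hb k)] at h2
  have hx0n : ∀ k : ℤ, ‖x0 k‖ ≤ β₀ * a⁻¹ ^ k := by
    intro k
    have h4 : (0:ℝ) < a ^ k := zpow_pos ha k
    have h5 : ‖x0 k‖ ≤ β₀ / a ^ k := by
      rw [le_div_iff₀ h4, mul_comm]; exact hx0r k
    simpa [div_eq_mul_inv, inv_zpow] using h5
  have hx1n : ∀ k : ℤ, ‖x1 k‖ ≤ β₁ * b⁻¹ ^ k := by
    intro k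
    have h4 : (0:ℝ) < b ^ k := zpow_pos hb k
    have h5 : ‖x1 k‖ ≤ β₁ / b ^ k := by
      rw [le_div_iff₀ h4, mul_comm]; exact hx1r k
    simpa [div_eq_mul_inv, inv_zpow] using h5
  have hβ₀0 : 0 ≤ β₀ := ENNReal.toReal_nonneg
  have hβ₁0 : 0 ≤ β₁ := ENNReal.toReal_nonneg
  set u : ℤ → E := fun k => x0 (k + 1) - x0 k with hu_def
  have hu1 : ∀ k : ℤ, u k = x1 k - x1 (k + 1) := by
    intro k
    have e1 : x0 (k+1) = v - x1 (k+1) := eq_sub_of_add_eq (hsplit (k+1))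
    have e2 : x0 k = v - x1 k := eq_sub_of_add_eq (hsplit k)
    simp only [hu_def]
    rw [e1, e2]
    abel
  have hx0nn : ∀ n : ℕ, ‖x0 (-(n:ℤ))‖ ≤ β₀ * a ^ n := by
    intro n
    have := hx0n (-(n:ℤ))
    rwa [zpow_neg, inv_zpow, inv_inv, zpow_natCast] at this
  have hx1nn : ∀ n : ℕ, ‖x1 (n:ℤ)‖ ≤ β₁ * b⁻¹ ^ n := by
    intro n
    have := hx1n (n:ℤ)
    rwa [zpow_natCast] at this
  have hbound_pos : ∀ n : ℕ, ‖u (n:ℤ)‖ ≤ β₁ * 2 * b⁻¹ ^ n := by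
    intro n
    rw [hu1]
    refine (norm_sub_le _ _).trans ?_
    have h1 := hx1nn n
    have h2 : ‖x1 ((n:ℤ)+1)‖ ≤ β₁ * b⁻¹ ^ (n+1) := by
      have := hx1nn (n+1)
      rwa [show (((n+1:ℕ)):ℤ) = (n:ℤ)+1 by push_cast; ring] at this
    have h3 : β₁ * b⁻¹ ^ (n+1) ≤ β₁ * b⁻¹ ^ n := by
      apply mul_le_mul_of_nonneg_left _ hβ₁0
      exact pow_le_pow_of_le_one (inv_nonneg.2 hb.le) hbinv.le (Nat.le_succ n)
    linarith
  have hbound_neg : ∀ n : ℕ, ‖u (-((n:ℤ)+1))‖ ≤ β₀ * 2 * a ^ n := by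
    intro n
    have e : u (-((n:ℤ)+1)) = x0 (-(n:ℤ)) - x0 (-((n:ℤ)+1)) := by
      simp only [hu_def]
      congr 2
      ring
    rw [e]
    refine (norm_sub_le _ _).trans ?_
    have h1 := hx0nn n
    have h2 : ‖x0 (-((n:ℤ)+1))‖ ≤ β₀ * a ^ (n+1) := by
      have := hx0nn (n+1)
      rwa [show (((n+1:ℕ)):ℤ) = (n:ℤ)+1 by push_cast; ring] at this
    have h3 : β₀ * a ^ (n+1) ≤ β₀ * a ^ n := by
      apply mul_le_mul_of_nonneg_left _ hβ₀0
      exact pow_le_pow_of_le_one ha.le ha1.le (Nat.le_succ n)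
    linarith
  have hgeo_a : Summable (fun n : ℕ => β₀ * 2 * a ^ n) :=
    (summable_geometric_of_lt_one ha.le ha1).mul_left _
  have hgeo_b : Summable (fun n : ℕ => β₁ * 2 * b⁻¹ ^ n) :=
    (summable_geometric_of_lt_one (inv_nonneg.2 hb.le) hbinv).mul_left _
  have hsumnorm : Summable (fun k : ℤ => ‖u k‖) := by
    apply Summable.of_nat_of_neg_add_one
    · exact Summable.of_nonneg_of_le (fun n => norm_nonneg _) hbound_pos hgeo_b
    · exact Summable.of_nonneg_of_le (fun n => norm_nonneg _) hbound_neg hgeo_a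
  have htel : ∀ n : ℕ, ∑ k ∈ Finset.Icc (-(n:ℤ)) (n:ℤ), u k
      = x0 ((n:ℤ)+1) - x0 (-(n:ℤ)) := by
    intro n
    induction n with
    | zero => simp [hu_def]
    | succ n ih =>
      have hc : ((n+1:ℕ):ℤ) = (n:ℤ)+1 := by push_cast; ring
      rw [hc]
      have hins : Finset.Icc (-((n:ℤ)+1)) ((n:ℤ)+1) =
          insert (-((n:ℤ)+1)) (insert ((n:ℤ)+1) (Finset.Icc (-(n:ℤ)) (n:ℤ))) := by
        ext j
        simp only [Finset.mem_Icc, Finset.mem_insert]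
        omega
      rw [hins, Finset.sum_insert (by simp only [Finset.mem_insert, Finset.mem_Icc]; omega),
        Finset.sum_insert (by simp only [Finset.mem_Icc]; omega), ih]
      simp only [hu_def]
      rw [show -((n:ℤ)+1) + 1 = -(n:ℤ) by ring]
      abel
  have hx0neg : Tendsto (fun n : ℕ => x0 (-(n:ℤ))) atTop (𝓝 0) := by
    apply squeeze_zero_norm hx0nn
    have := (tendsto_pow_atTop_nhds_zero_of_lt_one ha.le ha1).const_mul β₀
    simpa using this
  have hx1pos : Tendsto (fun n : ℕ => x1 ((n:ℤ)+1)) atTop (𝓝 0) := by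
    apply squeeze_zero_norm (a := fun n : ℕ => β₁ * b⁻¹ ^ (n+1))
    · intro n
      have := hx1nn (n+1)
      rwa [show (((n+1:ℕ)):ℤ) = (n:ℤ)+1 by push_cast; ring] at this
    · have h1 := (tendsto_pow_atTop_nhds_zero_of_lt_one
        (inv_nonneg.2 hb.le) hbinv).const_mul β₁
      have h2 := h1.comp (tendsto_add_atTop_nat 1)
      simpa [Function.comp_def] using h2
  have hpartial : Tendsto (fun n : ℕ => ∑ k ∈ Finset.Icc (-(n:ℤ)) (n:ℤ), u k)
      atTop (𝓝 v) := by
    have e : ∀ n : ℕ, ∑ k ∈ Finset.Icc (-(n:ℤ)) (n:ℤ), u k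
        = v - x1 ((n:ℤ)+1) - x0 (-(n:ℤ)) := by
      intro n
      rw [htel n, eq_sub_of_add_eq (hsplit ((n:ℤ)+1))]
    simp only [e]
    have hcv : Tendsto (fun _ : ℕ => v) atTop (𝓝 v) := tendsto_const_nhds
    have := (hcv.sub hx1pos).sub hx0neg
    simpa using this
  have hmono : Monotone (fun n : ℕ => Finset.Icc (-(n:ℤ)) (n:ℤ)) := by
    intro m n hmn
    apply Finset.Icc_subset_Icc <;> omega
  have hexh : Tendsto (fun n : ℕ => Finset.Icc (-(n:ℤ)) (n:ℤ)) atTop atTop := by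
    apply tendsto_atTop_finset_of_monotone hmono
    intro j
    exact ⟨j.natAbs + 1, by simp only [Finset.mem_Icc]; omega⟩
  have hHasSum : HasSum u v := hasSum_of_subseq_of_summable hsumnorm hexh hpartial
  have hIle : interpENorm S₀.toFun S₁.toFun θ v ≤
      max (wtSeq a S₀.toFun u) (wtSeq b S₁.toFun u) :=
    iInf_le_of_le u (iInf_le_of_le hHasSum le_rfl)
  refine hIle.trans ?_
  set K := ENNReal.ofReal (Real.exp 1) with hK
  have hw0 : wtSeq a S₀.toFun u ≤ (1 + K) * B₀ := by
    have hsub : wtSeq a S₀.toFun u =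
        S₀.toFun ((fun k => a ^ k • x0 (k+1)) - fun k => a ^ k • x0 k) := by
      show S₀.toFun _ = _
      congr 1
      funext k
      simp [hu_def, smul_sub]
    rw [hsub]
    refine (ben_sub_le S₀.isBanachENorm _ _).trans ?_
    have h1 : S₀.toFun (fun k => a ^ k • x0 (k+1)) = (‖a ^ (-1:ℤ)‖₊ : ℝ≥0∞) * B₀ :=
      wt_shift S₀ ha x0 1
    have h2 : (‖a ^ (-1:ℤ)‖₊ : ℝ≥0∞) ≤ K := by
      rw [← enorm_eq_nnnorm, Real.enorm_eq_ofReal (by positivity)]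
      apply ENNReal.ofReal_le_ofReal
      rw [zpow_neg_one, ha_def, ← Real.exp_neg, neg_neg]
      exact Real.exp_le_exp.2 hθ1.le
    calc S₀.toFun (fun k => a ^ k • x0 (k+1)) + B₀ ≤ K * B₀ + 1 * B₀ := by
          rw [h1, one_mul]
          exact add_le_add (mul_le_mul_left h2 _) le_rfl
      _ = (1 + K) * B₀ := by ring
  have hw1 : wtSeq b S₁.toFun u ≤ (1 + K) * B₁ := by
    have hsub : wtSeq b S₁.toFun u =
        S₁.toFun ((fun k => b ^ k • x1 k) - fun k => b ^ k • x1 (k+1)) := by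
      show S₁.toFun _ = _
      congr 1
      funext k
      simp [hu1 k, smul_sub]
    rw [hsub]
    refine (ben_sub_le S₁.isBanachENorm _ _).trans ?_
    have h1 : S₁.toFun (fun k => b ^ k • x1 (k+1)) = (‖b ^ (-1:ℤ)‖₊ : ℝ≥0∞) * B₁ :=
      wt_shift S₁ hb x1 1
    have h2 : (‖b ^ (-1:ℤ)‖₊ : ℝ≥0∞) ≤ K := by
      rw [← enorm_eq_nnnorm, Real.enorm_eq_ofReal (by positivity)]
      apply ENNReal.ofReal_le_ofReal
      rw [zpow_neg_one, hb_def, ← Real.exp_neg]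
      exact Real.exp_le_exp.2 (by linarith)
    calc B₁ + S₁.toFun (fun k => b ^ k • x1 (k+1)) ≤ 1 * B₁ + K * B₁ := by
          rw [h1, one_mul]
          exact add_le_add le_rfl (mul_le_mul_left h2 _)
      _ = (1 + K) * B₁ := by ring
  exact max_le (hw0.trans (mul_le_mul_right le_self_add _))
    (hw1.trans (mul_le_mul_right le_add_self _))

lemma direction3 {N₀ N₁ : BanachENorm ℝ E} (S₀ : SeqStructure ℝ E N₀)
    (S₁ : SeqStructure ℝ E N₁) {θ : ℝ} (hθ : θ ∈ Set.Ioo (0 : ℝ) 1)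
    (hN : ∀ v : E, enSum N₀.toFun N₁.toFun v = (‖v‖₊ : ℝ≥0∞)) (v : E)
    (x : ℤ → E) (hx : HasSum x v)
    (hA₀ : wtSeq (Real.exp (-θ)) S₀.toFun x ≠ ∞)
    (hA₁ : wtSeq (Real.exp (1 - θ)) S₁.toFun x ≠ ∞) :
    meanENorm S₀.toFun S₁.toFun θ v ≤
      ((1 - ENNReal.ofReal (Real.exp (-θ)))⁻¹ +
          (1 - ENNReal.ofReal ((Real.exp (1 - θ))⁻¹))⁻¹) *
        max (wtSeq (Real.exp (-θ)) S₀.toFun x) (wtSeq (Real.exp (1 - θ)) S₁.toFun x) := by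
  obtain ⟨hθ0, hθ1⟩ := hθ
  set a := Real.exp (-θ) with ha_def
  set b := Real.exp (1 - θ) with hb_def
  have ha : 0 < a := Real.exp_pos _
  have hb : 0 < b := Real.exp_pos _
  have ha1 : a < 1 := by rw [ha_def]; exact Real.exp_lt_one_iff.2 (by linarith)
  have hb1 : 1 < b := by rw [hb_def]; exact Real.one_lt_exp_iff.2 (by linarith)
  have hbinv : b⁻¹ < 1 := inv_lt_one_of_one_lt₀ hb1
  set A₀ := wtSeq a S₀.toFun x with hA₀_def
  set A₁ := wtSeq b S₁.toFun x with hA₁_def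
  set r₀ := ENNReal.ofReal a with hr₀_def
  set r₁ := ENNReal.ofReal b⁻¹ with hr₁_def
  have hr₀1 : r₀ < 1 := ENNReal.ofReal_lt_one.2 ha1
  have hr₁1 : r₁ < 1 := ENNReal.ofReal_lt_one.2 hbinv
  have hr₀ne : (1 : ℝ≥0∞) - r₀ ≠ 0 := by
    simp only [ne_eq, tsub_eq_zero_iff_le, not_le]
    exact hr₀1
  have hr₁ne : (1 : ℝ≥0∞) - r₁ ≠ 0 := by
    simp only [ne_eq, tsub_eq_zero_iff_le, not_le]
    exact hr₁1
  -- the series defining x⃗⁰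
  set f₀ : ℕ → (ℤ → E) := fun m => fun k => a ^ k • x (k + (-(m:ℤ) - 1)) with hf₀
  have hc₀ : ∀ m : ℕ, S₀.toFun (f₀ m) ≤ r₀ ^ (m+1) * A₀ := by
    intro m
    have h1 := wt_shift S₀ ha x (-(m:ℤ) - 1)
    rw [hf₀]
    rw [h1]
    have e : -(-(m:ℤ) - 1) = ((m+1 : ℕ) : ℤ) := by push_cast; ring
    rw [e, zpow_natCast, nnnorm_pow, ENNReal.coe_pow,
      ← enorm_eq_nnnorm, Real.enorm_eq_ofReal ha.le]
  have hsum₀ : ∑' m : ℕ, (r₀ ^ (m+1) * A₀) ≤ (1 - r₀)⁻¹ * A₀ := by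
    rw [ENNReal.tsum_mul_right]
    apply mul_le_mul_left
    rw [ENNReal.tsum_geometric_add_one]
    exact mul_le_of_le_one_left zero_le hr₀1.le
  have hfin₀ : ∑' m : ℕ, (r₀ ^ (m+1) * A₀) ≠ ∞ :=
    ne_top_of_le_ne_top (ENNReal.mul_ne_top (ENNReal.inv_ne_top.2 hr₀ne) hA₀) hsum₀
  obtain ⟨g₀, hg₀le, hg₀lim⟩ := ben_series S₀.isBanachENorm f₀ _ hc₀ hfin₀
  have hg₀ : S₀.toFun g₀ ≤ (1 - r₀)⁻¹ * A₀ := hg₀le.trans hsum₀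
  -- the series defining x⃗¹
  set f₁ : ℕ → (ℤ → E) := fun m => fun k => b ^ k • x (k + (m:ℤ)) with hf₁
  have hc₁ : ∀ m : ℕ, S₁.toFun (f₁ m) ≤ r₁ ^ m * A₁ := by
    intro m
    have h1 := wt_shift S₁ hb x (m:ℤ)
    rw [hf₁]
    rw [h1]
    have e : b ^ (-(m:ℤ)) = b⁻¹ ^ m := by
      rw [zpow_neg, zpow_natCast, inv_pow]
    rw [e, nnnorm_pow, ENNReal.coe_pow, ← enorm_eq_nnnorm, Real.enorm_eq_ofReal (by positivity)]
  have hsum₁ : ∑' m : ℕ, (r₁ ^ m * A₁) ≤ (1 - r₁)⁻¹ * A₁ := by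
    rw [ENNReal.tsum_mul_right]
    apply mul_le_mul_left
    rw [ENNReal.tsum_geometric]
  have hfin₁ : ∑' m : ℕ, (r₁ ^ m * A₁) ≠ ∞ :=
    ne_top_of_le_ne_top (ENNReal.mul_ne_top (ENNReal.inv_ne_top.2 hr₁ne) hA₁) hsum₁
  obtain ⟨g₁, hg₁le, hg₁lim⟩ := ben_series S₁.isBanachENorm f₁ _ hc₁ hfin₁
  have hg₁ : S₁.toFun g₁ ≤ (1 - r₁)⁻¹ * A₁ := hg₁le.trans hsum₁
  set x0 : ℤ → E := fun k => (a ^ k)⁻¹ • g₀ k with hx0_def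
  set x1 : ℤ → E := fun k => (b ^ k)⁻¹ • g₁ k with hx1_def
  have hsplit : ∀ k : ℤ, x0 k + x1 k = v := by
    intro k
    have hpk : Tendsto (fun n => (∑ m ∈ Finset.range n, f₀ m) k) atTop (𝓝 (g₀ k)) := by
      apply tendsto_of_ennnorm
      apply ennreal_squeeze_zero (fun n => ?_) hg₀lim
      calc (‖(∑ m ∈ Finset.range n, f₀ m) k - g₀ k‖₊ : ℝ≥0∞)
          = ‖((∑ m ∈ Finset.range n, f₀ m) - g₀) k‖₊ := by rw [Pi.sub_apply]
        _ ≤ N₀.toFun (((∑ m ∈ Finset.range n, f₀ m) - g₀) k) := en_norm_le_left hN _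
        _ ≤ S₀.toFun ((∑ m ∈ Finset.range n, f₀ m) - g₀) := S₀.coord _ k
    have hqk : Tendsto (fun n => (∑ m ∈ Finset.range n, f₁ m) k) atTop (𝓝 (g₁ k)) := by
      apply tendsto_of_ennnorm
      apply ennreal_squeeze_zero (fun n => ?_) hg₁lim
      calc (‖(∑ m ∈ Finset.range n, f₁ m) k - g₁ k‖₊ : ℝ≥0∞)
          = ‖((∑ m ∈ Finset.range n, f₁ m) - g₁) k‖₊ := by rw [Pi.sub_apply]
        _ ≤ N₁.toFun (((∑ m ∈ Finset.range n, f₁ m) - g₁) k) := en_norm_le_right hN _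
        _ ≤ S₁.toFun ((∑ m ∈ Finset.range n, f₁ m) - g₁) := S₁.coord _ k
    have h1 : Tendsto (fun n => (a ^ k)⁻¹ • (∑ m ∈ Finset.range n, f₀ m) k +
        (b ^ k)⁻¹ • (∑ m ∈ Finset.range n, f₁ m) k) atTop (𝓝 (x0 k + x1 k)) :=
      (hpk.const_smul _).add (hqk.const_smul _)
    have hcoordp : ∀ n : ℕ, (a ^ k)⁻¹ • (∑ m ∈ Finset.range n, f₀ m) k
        = ∑ m ∈ Finset.range n, x (k + (-(m:ℤ) - 1)) := by
      intro n
      rw [Finset.sum_apply]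
      simp only [hf₀]
      rw [← Finset.smul_sum, inv_smul_smul₀ (zpow_ne_zero _ ha.ne')]
    have hcoordq : ∀ n : ℕ, (b ^ k)⁻¹ • (∑ m ∈ Finset.range n, f₁ m) k
        = ∑ m ∈ Finset.range n, x (k + (m:ℤ)) := by
      intro n
      rw [Finset.sum_apply]
      simp only [hf₁]
      rw [← Finset.smul_sum, inv_smul_smul₀ (zpow_ne_zero _ hb.ne')]
    have hIco : ∀ n : ℕ,
        (∑ m ∈ Finset.range n, x (k + (-(m:ℤ) - 1))) + (∑ m ∈ Finset.range n, x (k + (m:ℤ)))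
          = ∑ j ∈ Finset.Ico (k - (n:ℤ)) (k + (n:ℤ)), x j := by
      intro n
      induction n with
      | zero => simp
      | succ n ih =>
        have hc : ((n+1:ℕ):ℤ) = (n:ℤ)+1 := by push_cast; ring
        rw [Finset.sum_range_succ, Finset.sum_range_succ, hc]
        have hins : Finset.Ico (k - ((n:ℤ)+1)) (k + ((n:ℤ)+1)) =
            insert (k - ((n:ℤ)+1)) (insert (k + (n:ℤ))
              (Finset.Ico (k - (n:ℤ)) (k + (n:ℤ)))) := by
          ext j
          simp only [Finset.mem_Ico, Finset.mem_insert]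
          omega
        rw [hins, Finset.sum_insert (by simp only [Finset.mem_insert, Finset.mem_Ico]; omega),
          Finset.sum_insert (by simp only [Finset.mem_Ico]; omega), ← ih]
        rw [show k + (-(n:ℤ) - 1) = k - ((n:ℤ)+1) by ring]
        abel
    have h2 : Tendsto (fun n : ℕ => ∑ j ∈ Finset.Ico (k - (n:ℤ)) (k + (n:ℤ)), x j)
        atTop (𝓝 v) := by
      have hmono : Monotone (fun n : ℕ => Finset.Ico (k - (n:ℤ)) (k + (n:ℤ))) := by
        intro m n hmn
        apply Finset.Ico_subset_Ico <;> omega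
      exact hx.comp (tendsto_atTop_finset_of_monotone hmono (fun j =>
        ⟨(j - k).natAbs + (k - j).natAbs + 1, by simp only [Finset.mem_Ico]; omega⟩))
    have h3 : Tendsto (fun n : ℕ => ∑ j ∈ Finset.Ico (k - (n:ℤ)) (k + (n:ℤ)), x j)
        atTop (𝓝 (x0 k + x1 k)) := by
      apply h1.congr
      intro n
      rw [hcoordp n, hcoordq n, hIco n]
    exact tendsto_nhds_unique h3 h2
  have hMle : meanENorm S₀.toFun S₁.toFun θ v ≤
      wtSeq a S₀.toFun x0 + wtSeq b S₁.toFun x1 :=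
    iInf_le_of_le x0 (iInf_le_of_le x1 (iInf_le_of_le hsplit le_rfl))
  refine hMle.trans ?_
  have e₀ : wtSeq a S₀.toFun x0 = S₀.toFun g₀ := by
    show S₀.toFun _ = _
    congr 1
    funext k
    show a ^ k • (a ^ k)⁻¹ • g₀ k = g₀ k
    rw [smul_inv_smul₀ (zpow_ne_zero _ ha.ne')]
  have e₁ : wtSeq b S₁.toFun x1 = S₁.toFun g₁ := by
    show S₁.toFun _ = _
    congr 1
    funext k
    show b ^ k • (b ^ k)⁻¹ • g₁ k = g₁ k
    rw [smul_inv_smul₀ (zpow_ne_zero _ hb.ne')]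
  rw [e₀, e₁]
  calc S₀.toFun g₀ + S₁.toFun g₁ ≤ (1 - r₀)⁻¹ * A₀ + (1 - r₁)⁻¹ * A₁ := add_le_add hg₀ hg₁
    _ ≤ (1 - r₀)⁻¹ * max A₀ A₁ + (1 - r₁)⁻¹ * max A₀ A₁ :=
        add_le_add (mul_le_mul_right (le_max_left _ _) _)
          (mul_le_mul_right (le_max_right _ _) _)
    _ = ((1 - r₀)⁻¹ + (1 - r₁)⁻¹) * max A₀ A₁ := (add_mul _ _ _).symm

end AuxLemmas

/-- mean-method formulation. The mean-method norm
`‖x‖^{(m)} = inf {‖x⃗⁰‖_{𝔖₀(e^{-θ})} + ‖x⃗¹‖_{𝔖₁(e^{1-θ})} : x = x⁰_k + x¹_k ∀k}`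
equals the `𝔖₀(e^{-θ}) + 𝔖₁(e^{1-θ})`-norm of the constant sequence `(…,x,x,x,…)` and is
an equivalent norm on `(𝒳₀,𝒳₁)_θ`, with constants depending only on `θ`. -/
theorem statement6 (θ : ℝ) (hθ : θ ∈ Set.Ioo (0 : ℝ) 1) :
    ∃ C : ℝ≥0∞, C ≠ 0 ∧ C ≠ ∞ ∧
      ∀ (E : Type u) [NormedAddCommGroup E] [NormedSpace ℝ E],
      ∀ N₀ N₁ : BanachENorm ℝ E,
        (∀ v : E, enSum N₀.toFun N₁.toFun v = (‖v‖₊ : ℝ≥0∞)) →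
      ∀ (S₀ : SeqStructure ℝ E N₀) (S₁ : SeqStructure ℝ E N₁) (v : E),
        (meanENorm S₀.toFun S₁.toFun θ v =
          enSum (wtSeq (Real.exp (-θ)) S₀.toFun) (wtSeq (Real.exp (1 - θ)) S₁.toFun)
            (fun _ => v)) ∧
        (interpENorm S₀.toFun S₁.toFun θ v ≤ C * meanENorm S₀.toFun S₁.toFun θ v) ∧
        (meanENorm S₀.toFun S₁.toFun θ v ≤ C * interpENorm S₀.toFun S₁.toFun θ v) := by
  obtain ⟨hθ0, hθ1⟩ := hθ
  set K := ENNReal.ofReal (Real.exp 1) with hK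
  set D₀ := (1 - ENNReal.ofReal (Real.exp (-θ)))⁻¹ with hD₀
  set D₁ := (1 - ENNReal.ofReal ((Real.exp (1 - θ))⁻¹))⁻¹ with hD₁
  set C := 1 + K + (D₀ + D₁) with hC
  have hr₀1 : ENNReal.ofReal (Real.exp (-θ)) < 1 :=
    ENNReal.ofReal_lt_one.2 (Real.exp_lt_one_iff.2 (by linarith))
  have hr₁1 : ENNReal.ofReal ((Real.exp (1 - θ))⁻¹) < 1 :=
    ENNReal.ofReal_lt_one.2 (inv_lt_one_of_one_lt₀ (Real.one_lt_exp_iff.2 (by linarith)))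
  have hD₀top : D₀ ≠ ∞ := by
    rw [hD₀]
    exact ENNReal.inv_ne_top.2 (by simp only [ne_eq, tsub_eq_zero_iff_le, not_le]; exact hr₀1)
  have hD₁top : D₁ ≠ ∞ := by
    rw [hD₁]
    exact ENNReal.inv_ne_top.2 (by simp only [ne_eq, tsub_eq_zero_iff_le, not_le]; exact hr₁1)
  have hC0 : C ≠ 0 := by
    rw [hC]
    simp
  have hCtop : C ≠ ∞ := by
    rw [hC]
    exact ENNReal.add_ne_top.2 ⟨ENNReal.add_ne_top.2 ⟨ENNReal.one_ne_top, ENNReal.ofReal_ne_top⟩,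
      ENNReal.add_ne_top.2 ⟨hD₀top, hD₁top⟩⟩
  refine ⟨C, hC0, hCtop, ?_⟩
  intro E _ _ N₀ N₁ hN S₀ S₁ v
  refine ⟨?_, ?_, ?_⟩
  · -- the equality with the sum-space norm of the constant sequence
    apply le_antisymm
    · refine le_iInf fun w => ?_
      refine iInf_le_of_le w (iInf_le_of_le ((fun _ => v) - w)
        (iInf_le_of_le (fun k => by simp) le_rfl))
    · refine le_iInf fun x0 => le_iInf fun x1 => le_iInf fun hsplit => ?_
      refine iInf_le_of_le x0 ?_
      have e : (fun _ : ℤ => v) - x0 = x1 := by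
        funext k
        rw [Pi.sub_apply]
        exact (eq_sub_of_add_eq' (hsplit k)).symm
      rw [e]
  · -- interpolation norm ≤ C * mean norm
    set M := meanENorm S₀.toFun S₁.toFun θ v with hM
    refine ENNReal.le_of_forall_pos_le_add fun ε hε hlt => ?_
    have hMne : M ≠ ∞ := by
      intro hMtop
      rw [hMtop, ENNReal.mul_top hC0] at hlt
      exact (lt_irrefl _ hlt).elim
    have hε'0 : (ε : ℝ≥0∞) / C ≠ 0 :=
      (ENNReal.div_pos (by exact_mod_cast hε.ne') hCtop).ne'
    have hε'top : (ε : ℝ≥0∞) / C ≠ ∞ :=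
      ENNReal.mul_ne_top ENNReal.coe_ne_top (ENNReal.inv_ne_top.2 hC0)
    have h : M < M + (ε : ℝ≥0∞) / C := ENNReal.lt_add_right hMne hε'0
    have h' : (⨅ (x0 : ℤ → E) (x1 : ℤ → E) (_ : ∀ k : ℤ, x0 k + x1 k = v),
        wtSeq (Real.exp (-θ)) S₀.toFun x0 + wtSeq (Real.exp (1 - θ)) S₁.toFun x1)
          < M + (ε : ℝ≥0∞) / C := h
    rw [iInf_lt_iff] at h'
    obtain ⟨x0, h'⟩ := h'
    rw [iInf_lt_iff] at h'
    obtain ⟨x1, h'⟩ := h'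
    rw [iInf_lt_iff] at h'
    obtain ⟨hsplit, h'⟩ := h'
    have hMε : M + (ε : ℝ≥0∞) / C < ∞ :=
      ENNReal.add_lt_top.2 ⟨hMne.lt_top, hε'top.lt_top⟩
    have hB₀ : wtSeq (Real.exp (-θ)) S₀.toFun x0 ≠ ∞ :=
      (lt_of_le_of_lt le_self_add (h'.trans hMε)).ne
    have hB₁ : wtSeq (Real.exp (1 - θ)) S₁.toFun x1 ≠ ∞ :=
      (lt_of_le_of_lt le_add_self (h'.trans hMε)).ne
    have hd2 := direction2 S₀ S₁ ⟨hθ0, hθ1⟩ hN v x0 x1 hsplit hB₀ hB₁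
    calc interpENorm S₀.toFun S₁.toFun θ v
        ≤ (1 + K) * (wtSeq (Real.exp (-θ)) S₀.toFun x0 +
            wtSeq (Real.exp (1 - θ)) S₁.toFun x1) := hd2
      _ ≤ C * (M + (ε : ℝ≥0∞) / C) := mul_le_mul' (by rw [hC]; exact le_self_add) h'.le
      _ = C * M + C * ((ε : ℝ≥0∞) / C) := mul_add _ _ _
      _ = C * M + ε := by rw [ENNReal.mul_div_cancel hC0 hCtop]
  · -- mean norm ≤ C * interpolation norm
    set I := interpENorm S₀.toFun S₁.toFun θ v with hI
    refine ENNReal.le_of_forall_pos_le_add fun ε hε hlt => ?_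
    have hIne : I ≠ ∞ := by
      intro hItop
      rw [hItop, ENNReal.mul_top hC0] at hlt
      exact (lt_irrefl _ hlt).elim
    have hε'0 : (ε : ℝ≥0∞) / C ≠ 0 :=
      (ENNReal.div_pos (by exact_mod_cast hε.ne') hCtop).ne'
    have hε'top : (ε : ℝ≥0∞) / C ≠ ∞ :=
      ENNReal.mul_ne_top ENNReal.coe_ne_top (ENNReal.inv_ne_top.2 hC0)
    have h : I < I + (ε : ℝ≥0∞) / C := ENNReal.lt_add_right hIne hε'0
    have h' : (⨅ (x : ℤ → E) (_ : HasSum x v),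
        max (wtSeq (Real.exp (-θ)) S₀.toFun x) (wtSeq (Real.exp (1 - θ)) S₁.toFun x))
          < I + (ε : ℝ≥0∞) / C := h
    rw [iInf_lt_iff] at h'
    obtain ⟨x, h'⟩ := h'
    rw [iInf_lt_iff] at h'
    obtain ⟨hxsum, h'⟩ := h'
    have hIε : I + (ε : ℝ≥0∞) / C < ∞ :=
      ENNReal.add_lt_top.2 ⟨hIne.lt_top, hε'top.lt_top⟩
    have hA₀ : wtSeq (Real.exp (-θ)) S₀.toFun x ≠ ∞ :=
      (lt_of_le_of_lt (le_max_left _ _) (h'.trans hIε)).ne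
    have hA₁ : wtSeq (Real.exp (1 - θ)) S₁.toFun x ≠ ∞ :=
      (lt_of_le_of_lt (le_max_right _ _) (h'.trans hIε)).ne
    have hd3 := direction3 S₀ S₁ ⟨hθ0, hθ1⟩ hN v x hxsum hA₀ hA₁
    calc meanENorm S₀.toFun S₁.toFun θ v
        ≤ (D₀ + D₁) * max (wtSeq (Real.exp (-θ)) S₀.toFun x)
            (wtSeq (Real.exp (1 - θ)) S₁.toFun x) := hd3
      _ ≤ C * (I + (ε : ℝ≥0∞) / C) := mul_le_mul' (by rw [hC]; exact le_add_self) h'.le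
      _ = C * I + C * ((ε : ℝ≥0∞) / C) := mul_add _ _ _
      _ = C * I + ε := by rw [ENNReal.mul_div_cancel hC0 hCtop]
end

section
/- Let 𝒳 = [X,𝔖] be a c₀-sequentially structured Banach space. Then the dual space 𝔖*, identified with a space of X*-valued sequences via the pairing ⟨x⃗, x⃗*⟩ = Σ_{k∈ℤ} ⟨x_k, x*_k⟩, satisfies: ℓ¹(ℤ;X*) ↪ 𝔖* ↪ ℓ∞(ℤ;X*) contractively, 𝔖* is translation invariant with equal norms, and 𝔖* is an ℓ∞-sequence structure on X*; in particular 𝒳* := [X*,𝔖*] is an ℓ∞-sequentially structured Banach space. -/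
open scoped ENNReal NNReal
open Filter Topology

universe u v

lemma ofReal_norm_eq_coe_nnnorm {F : Type*} [SeminormedAddCommGroup F] (a : F) :
    ENNReal.ofReal ‖a‖ = (‖a‖₊ : ℝ≥0∞) :=
  (ofReal_norm a).trans (enorm_eq_nnnorm a)

section stmt7Aux
variable {E : Type u} [AddCommGroup E] [Module ℝ E]

lemma pair_le_dual {S : (ℤ → E) → ℝ≥0∞} (Φ : ℤ → E →ₗ[ℝ] ℝ) {x : ℤ → E}
    (hx : (Function.support x).Finite) (hS : S x ≤ 1) :
    (‖∑ᶠ k : ℤ, Φ k (x k)‖₊ : ℝ≥0∞) ≤ dualSeqENorm S Φ :=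
  le_iSup₂_of_le x hx (le_iSup_of_le hS le_rfl)

lemma dualSeq_le {S : (ℤ → E) → ℝ≥0∞} {Φ : ℤ → E →ₗ[ℝ] ℝ} {C : ℝ≥0∞}
    (h : ∀ x : ℤ → E, (Function.support x).Finite → S x ≤ 1 →
      (‖∑ᶠ k : ℤ, Φ k (x k)‖₊ : ℝ≥0∞) ≤ C) : dualSeqENorm S Φ ≤ C :=
  iSup₂_le fun x hx => iSup_le fun hS => h x hx hS

lemma dual_apply_le {N : E → ℝ≥0∞} (φ : E →ₗ[ℝ] ℝ) {v : E} (hv : N v ≤ 1) :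
    (‖φ v‖₊ : ℝ≥0∞) ≤ dualENorm N φ :=
  le_iSup₂_of_le v hv le_rfl

lemma banachENorm_zero {N : E → ℝ≥0∞} (hN : IsBanachENorm ℝ N) : N 0 = 0 := by
  have h := hN.2.2.1 (0 : ℝ) 0
  simpa using h

lemma dual_apply_le_mul {N : E → ℝ≥0∞} (hN : IsBanachENorm ℝ N) (φ : E →ₗ[ℝ] ℝ) {v : E}
    (hv : N v ≠ ∞) : (‖φ v‖₊ : ℝ≥0∞) ≤ N v * dualENorm N φ := by
  rcases eq_or_ne (N v) 0 with h0 | h0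
  · have hv0 : v = 0 := hN.1 v h0
    simp [hv0]
  · have hc0 : 0 < (N v).toReal := ENNReal.toReal_pos h0 hv
    set c : ℝ := (N v).toReal with hc
    have hofc : ENNReal.ofReal c = N v := ENNReal.ofReal_toReal hv
    have hnc : (‖c⁻¹‖₊ : ℝ≥0∞) = (N v)⁻¹ := by
      rw [← ofReal_norm_eq_coe_nnnorm, Real.norm_of_nonneg (le_of_lt (inv_pos.2 hc0)),
        ENNReal.ofReal_inv_of_pos hc0, hofc]
    have h1 : N (c⁻¹ • v) ≤ 1 := by
      refine (hN.2.2.1 c⁻¹ v).trans ?_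
      rw [hnc, ENNReal.inv_mul_cancel h0 hv]
    have h2 : (‖φ (c⁻¹ • v)‖₊ : ℝ≥0∞) ≤ dualENorm N φ := dual_apply_le φ h1
    have h3 : φ v = c * φ (c⁻¹ • v) := by
      rw [map_smul, smul_eq_mul, ← mul_assoc, mul_inv_cancel₀ (ne_of_gt hc0), one_mul]
    calc (‖φ v‖₊ : ℝ≥0∞) = ENNReal.ofReal ‖φ v‖ := (ofReal_norm_eq_coe_nnnorm _).symm
      _ = ENNReal.ofReal c * ENNReal.ofReal ‖φ (c⁻¹ • v)‖ := by
          rw [h3, norm_mul, Real.norm_of_nonneg (le_of_lt hc0),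
            ENNReal.ofReal_mul (le_of_lt hc0)]
      _ = N v * (‖φ (c⁻¹ • v)‖₊ : ℝ≥0∞) := by rw [hofc, ofReal_norm_eq_coe_nnnorm]
      _ ≤ N v * dualENorm N φ := mul_le_mul_right h2 _

end stmt7Aux

/-- If `𝒳 = [X,𝔖]` is a `c₀`-sequentially structured Banach space, then the
dual `𝔖*`, identified with `X*`-valued sequences via the pairing
`⟨x⃗,x⃗*⟩ = ∑_k ⟨x_k,x*_k⟩`, satisfies `ℓ¹(ℤ;X*) ↪ 𝔖* ↪ ℓ∞(ℤ;X*)` contractively, is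
translation invariant with equal norms, and is an `ℓ∞`-sequence structure on `X*` (single
entries isometrically, triangle inequality, homogeneity, Cesàro contractivity and
completeness). -/
theorem statement7 {E : Type u} [AddCommGroup E] [Module ℝ E]
    (X : BanachENorm ℝ E) (S : SeqStructure ℝ E X)
    (hc0 : IsC0SeqStructure S) :
    (∀ Φ : ℤ → E →ₗ[ℝ] ℝ,
      dualSeqENorm S.toFun Φ ≤ ∑' k : ℤ, dualENorm X.toFun (Φ k)) ∧
    (∀ (Φ : ℤ → E →ₗ[ℝ] ℝ) (k : ℤ),
      dualENorm X.toFun (Φ k) ≤ dualSeqENorm S.toFun Φ) ∧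
    (∀ (Φ : ℤ → E →ₗ[ℝ] ℝ) (n : ℤ),
      dualSeqENorm S.toFun (fun k => Φ (k + n)) = dualSeqENorm S.toFun Φ) ∧
    (∀ (φ : E →ₗ[ℝ] ℝ) (n : ℤ),
      dualSeqENorm S.toFun (fun k => if k = n then φ else 0) = dualENorm X.toFun φ) ∧
    (∀ Φ Ψ : ℤ → E →ₗ[ℝ] ℝ,
      dualSeqENorm S.toFun (Φ + Ψ) ≤ dualSeqENorm S.toFun Φ + dualSeqENorm S.toFun Ψ) ∧
    (∀ (c : ℝ) (Φ : ℤ → E →ₗ[ℝ] ℝ),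
      dualSeqENorm S.toFun (c • Φ) ≤ (‖c‖₊ : ℝ≥0∞) * dualSeqENorm S.toFun Φ) ∧
    (∀ (n : ℕ) (Φ : ℤ → E →ₗ[ℝ] ℝ),
      dualSeqENorm S.toFun (cesaro ℝ n Φ) ≤ dualSeqENorm S.toFun Φ) ∧
    (∀ F : ℕ → ℤ → E →ₗ[ℝ] ℝ, (∀ n, dualSeqENorm S.toFun (F n) ≠ ∞) →
      (∀ ε : ℝ≥0∞, 0 < ε → ∃ n₀ : ℕ, ∀ m, n₀ ≤ m → ∀ n, n₀ ≤ n →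
        dualSeqENorm S.toFun (F m - F n) < ε) →
      ∃ Φ, dualSeqENorm S.toFun Φ ≠ ∞ ∧
        Filter.Tendsto (fun n => dualSeqENorm S.toFun (F n - Φ)) Filter.atTop (nhds 0)) := by
  -- coordinate bound for admissible sequences
  have hcoord : ∀ {x : ℤ → E}, S.toFun x ≤ 1 → ∀ k, X.toFun (x k) ≤ 1 :=
    fun {x} hS k => (S.coord x k).trans hS
  -- support of pairing sequence
  have hsupp : ∀ (Φ : ℤ → E →ₗ[ℝ] ℝ) (x : ℤ → E) (hx : (Function.support x).Finite),
      Function.support (fun k => Φ k (x k)) ⊆ hx.toFinset := by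
    intro Φ x hx k hk
    rw [Set.Finite.coe_toFinset]
    intro h0
    simp only [Function.mem_support] at hk
    exact hk (by rw [h0, map_zero])
  -- part 1 : ℓ¹ ↪ 𝔖*
  have part1 : ∀ Φ : ℤ → E →ₗ[ℝ] ℝ,
      dualSeqENorm S.toFun Φ ≤ ∑' k : ℤ, dualENorm X.toFun (Φ k) := by
    intro Φ
    refine dualSeq_le fun x hx hS => ?_
    rw [finsum_eq_sum_of_support_subset _ (hsupp Φ x hx)]
    calc (‖∑ k ∈ hx.toFinset, Φ k (x k)‖₊ : ℝ≥0∞)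
        ≤ ∑ k ∈ hx.toFinset, (‖Φ k (x k)‖₊ : ℝ≥0∞) := by
          rw [← ENNReal.coe_finset_sum]
          exact_mod_cast nnnorm_sum_le hx.toFinset fun k => Φ k (x k)
      _ ≤ ∑ k ∈ hx.toFinset, dualENorm X.toFun (Φ k) :=
          Finset.sum_le_sum fun k _ => dual_apply_le _ (hcoord hS k)
      _ ≤ ∑' k : ℤ, dualENorm X.toFun (Φ k) := ENNReal.sum_le_tsum _
  -- part 2 : 𝔖* ↪ ℓ∞
  have part2 : ∀ (Φ : ℤ → E →ₗ[ℝ] ℝ) (k : ℤ),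
      dualENorm X.toFun (Φ k) ≤ dualSeqENorm S.toFun Φ := by
    intro Φ k
    refine iSup₂_le fun v hv => ?_
    set x : ℤ → E := fun j => if j = k then v else 0 with hxdef
    have hxs : Function.support x ⊆ {k} := by
      intro j hj
      by_contra h
      exact hj (by simp [hxdef, show j ≠ k from fun e => h (by simp [e])])
    have hxfin : (Function.support x).Finite := Set.Finite.subset (Set.finite_singleton k) hxs
    have hSx : S.toFun x ≤ 1 := by
      rw [hxdef, S.single v k]; exact hv
    have hsum : ∑ᶠ j : ℤ, Φ j (x j) = Φ k v := by
      rw [finsum_eq_single _ k]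
      · simp [hxdef]
      · intro j hj; simp [hxdef, hj]
    have := pair_le_dual Φ hxfin hSx
    rwa [hsum] at this
  -- one-sided shift estimate
  have shift_le : ∀ (Φ : ℤ → E →ₗ[ℝ] ℝ) (n : ℤ),
      dualSeqENorm S.toFun (fun k => Φ (k + n)) ≤ dualSeqENorm S.toFun Φ := by
    intro Φ n
    refine dualSeq_le fun x hx hS => ?_
    set y : ℤ → E := fun k => x (k - n) with hydef
    have hyfin : (Function.support y).Finite := by
      refine Set.Finite.subset (hx.image (· + n)) ?_
      intro k hk
      simp only [Function.mem_support, hydef] at hk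
      exact ⟨k - n, hk, by ring⟩
    have hSy : S.toFun y ≤ 1 := by
      have heq : (fun k => y (k + n)) = x := by
        funext k; simp [hydef]
      have := S.shift y n
      rw [heq] at this
      rw [← this]; exact hS
    have hsum : ∑ᶠ k : ℤ, Φ (k + n) (x k) = ∑ᶠ k : ℤ, Φ k (y k) := by
      have := finsum_comp_equiv (Equiv.addRight n) (f := fun k => Φ k (y k))
      rw [← this]
      refine finsum_congr fun k => ?_
      simp [hydef, Equiv.coe_addRight]
    rw [hsum]
    exact pair_le_dual Φ hyfin hSy
  -- part 3 : translation invariance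
  have part3 : ∀ (Φ : ℤ → E →ₗ[ℝ] ℝ) (n : ℤ),
      dualSeqENorm S.toFun (fun k => Φ (k + n)) = dualSeqENorm S.toFun Φ := by
    intro Φ n
    refine le_antisymm (shift_le Φ n) ?_
    have := shift_le (fun k => Φ (k + n)) (-n)
    have heq : (fun k => (fun j => Φ (j + n)) (k + -n)) = Φ := by
      funext k; simp
    rwa [heq] at this
  -- part 4 : single entries
  have part4 : ∀ (φ : E →ₗ[ℝ] ℝ) (n : ℤ),
      dualSeqENorm S.toFun (fun k => if k = n then φ else 0) = dualENorm X.toFun φ := by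
    intro φ n
    refine le_antisymm ?_ ?_
    · refine dualSeq_le fun x hx hS => ?_
      have hsum : ∑ᶠ k : ℤ, (if k = n then φ else 0 : E →ₗ[ℝ] ℝ) (x k) = φ (x n) := by
        rw [finsum_eq_single _ n]
        · simp
        · intro j hj; simp [hj]
      rw [hsum]
      exact dual_apply_le φ (hcoord hS n)
    · have := part2 (fun k => if k = n then φ else 0) n
      simpa using this
  -- part 5 : triangle inequality
  have part5 : ∀ Φ Ψ : ℤ → E →ₗ[ℝ] ℝ,
      dualSeqENorm S.toFun (Φ + Ψ) ≤ dualSeqENorm S.toFun Φ + dualSeqENorm S.toFun Ψ := by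
    intro Φ Ψ
    refine dualSeq_le fun x hx hS => ?_
    have hsum : ∑ᶠ k : ℤ, (Φ + Ψ) k (x k)
        = (∑ᶠ k : ℤ, Φ k (x k)) + ∑ᶠ k : ℤ, Ψ k (x k) := by
      rw [finsum_eq_sum_of_support_subset _ (hsupp Φ x hx),
        finsum_eq_sum_of_support_subset _ (hsupp Ψ x hx),
        finsum_eq_sum_of_support_subset (fun k => (Φ + Ψ) k (x k)) (s := hx.toFinset)
          (hsupp (Φ + Ψ) x hx), ← Finset.sum_add_distrib]
      rfl
    rw [hsum]
    calc (‖(∑ᶠ k : ℤ, Φ k (x k)) + ∑ᶠ k : ℤ, Ψ k (x k)‖₊ : ℝ≥0∞)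
        ≤ (‖∑ᶠ k : ℤ, Φ k (x k)‖₊ : ℝ≥0∞) + (‖∑ᶠ k : ℤ, Ψ k (x k)‖₊ : ℝ≥0∞) := by
          exact_mod_cast nnnorm_add_le _ _
      _ ≤ _ := add_le_add (pair_le_dual Φ hx hS) (pair_le_dual Ψ hx hS)
  -- part 6 : homogeneity
  have part6 : ∀ (c : ℝ) (Φ : ℤ → E →ₗ[ℝ] ℝ),
      dualSeqENorm S.toFun (c • Φ) ≤ (‖c‖₊ : ℝ≥0∞) * dualSeqENorm S.toFun Φ := by
    intro c Φ
    refine dualSeq_le fun x hx hS => ?_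
    have hsum : ∑ᶠ k : ℤ, (c • Φ) k (x k) = c * ∑ᶠ k : ℤ, Φ k (x k) := by
      rw [finsum_eq_sum_of_support_subset _ (hsupp Φ x hx),
        finsum_eq_sum_of_support_subset (fun k => (c • Φ) k (x k)) (s := hx.toFinset)
          (hsupp (c • Φ) x hx), Finset.mul_sum]
      rfl
    rw [hsum]
    calc (‖c * ∑ᶠ k : ℤ, Φ k (x k)‖₊ : ℝ≥0∞)
        = (‖c‖₊ : ℝ≥0∞) * (‖∑ᶠ k : ℤ, Φ k (x k)‖₊ : ℝ≥0∞) := by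
          rw [← ENNReal.coe_mul, nnnorm_mul]
      _ ≤ _ := mul_le_mul_right (pair_le_dual Φ hx hS) _
  -- part 7 : Cesàro contractivity
  have part7 : ∀ (n : ℕ) (Φ : ℤ → E →ₗ[ℝ] ℝ),
      dualSeqENorm S.toFun (cesaro ℝ n Φ) ≤ dualSeqENorm S.toFun Φ := by
    intro n Φ
    refine dualSeq_le fun x hx hS => ?_
    set y : ℤ → E := cesaro ℝ n x with hydef
    have hysupp : Function.support y ⊆ Function.support x := by
      intro k hk
      simp only [Function.mem_support, hydef, cesaro] at hk ⊢
      intro h0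
      simp [h0] at hk
    have hyfin : (Function.support y).Finite := hx.subset hysupp
    have hSy : S.toFun y ≤ 1 := (hc0.1 n x).trans hS
    have hsum : ∑ᶠ k : ℤ, (cesaro ℝ n Φ) k (x k) = ∑ᶠ k : ℤ, Φ k (y k) := by
      refine finsum_congr fun k => ?_
      simp only [hydef, cesaro, LinearMap.smul_apply, LinearMap.coe_sum,
        Finset.sum_apply, map_smul, map_sum, smul_eq_mul]
      congr 1
      refine Finset.sum_congr rfl fun m _ => ?_
      split <;> simp
    rw [hsum]
    exact pair_le_dual Φ hyfin hSy
  refine ⟨part1, part2, part3, part4, part5, part6, part7, ?_⟩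
  -- part 8 : completeness
  intro F hfin hcauchy
  -- difference of pairings
  have hsub : ∀ (A B : ℤ → E →ₗ[ℝ] ℝ) (x : ℤ → E) (hx : (Function.support x).Finite),
      ∑ᶠ k : ℤ, (A - B) k (x k) = (∑ᶠ k : ℤ, A k (x k)) - ∑ᶠ k : ℤ, B k (x k) := by
    intro A B x hx
    rw [finsum_eq_sum_of_support_subset _ (hsupp A x hx),
      finsum_eq_sum_of_support_subset _ (hsupp B x hx),
      finsum_eq_sum_of_support_subset (fun k => (A - B) k (x k)) (s := hx.toFinset)
        (hsupp (A - B) x hx), ← Finset.sum_sub_distrib]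
    rfl
  -- symmetry of the dual norm under negation of the difference
  have hneg : ∀ A B : ℤ → E →ₗ[ℝ] ℝ,
      dualSeqENorm S.toFun (A - B) = dualSeqENorm S.toFun (B - A) := by
    intro A B
    unfold dualSeqENorm
    refine iSup_congr fun x => iSup_congr fun hx => iSup_congr fun hS => ?_
    congr 1
    rw [← nnnorm_neg, ← finsum_neg_distrib]
    congr 1
    refine finsum_congr fun k => ?_
    simp
  -- the finiteness domain of X is a submodule
  let D : Submodule ℝ E :=
    { carrier := {v | X.toFun v ≠ ∞}
      add_mem' := by
        intro a b ha hb
        exact ne_top_of_le_ne_top (ENNReal.add_ne_top.2 ⟨ha, hb⟩) (X.isBanachENorm.2.1 a b)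
      zero_mem' := by
        simp only [Set.mem_setOf_eq, banachENorm_zero X.isBanachENorm]
        exact ENNReal.zero_ne_top
      smul_mem' := by
        intro c v hv
        exact ne_top_of_le_ne_top (ENNReal.mul_ne_top ENNReal.coe_ne_top hv)
          (X.isBanachENorm.2.2.1 c v) }
  -- pointwise Cauchy
  have key : ∀ (k : ℤ) (v : E), X.toFun v ≠ ∞ → CauchySeq fun n => F n k v := by
    intro k v hv
    rw [Metric.cauchySeq_iff]
    intro ε hε
    obtain ⟨n₀, hn₀⟩ := hcauchy (ENNReal.ofReal (ε / 2) / (X.toFun v + 1))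
      (ENNReal.div_pos (by simp [ENNReal.ofReal_eq_zero, not_le, half_pos hε])
        (ENNReal.add_ne_top.2 ⟨hv, ENNReal.one_ne_top⟩))
    refine ⟨n₀, fun m hm n hn => ?_⟩
    have h1 : (‖(F m - F n) k v‖₊ : ℝ≥0∞)
        ≤ X.toFun v * dualSeqENorm S.toFun (F m - F n) :=
      (dual_apply_le_mul X.isBanachENorm _ hv).trans (mul_le_mul_right (part2 _ k) _)
    have h2 : X.toFun v * dualSeqENorm S.toFun (F m - F n) ≤ ENNReal.ofReal (ε / 2) := by
      calc X.toFun v * dualSeqENorm S.toFun (F m - F n)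
          ≤ (X.toFun v + 1) * (ENNReal.ofReal (ε / 2) / (X.toFun v + 1)) :=
            mul_le_mul' (le_add_of_nonneg_right zero_le_one) (le_of_lt (hn₀ m hm n hn))
        _ = ENNReal.ofReal (ε / 2) := by
            rw [mul_comm]
            exact ENNReal.div_mul_cancel (by simp) (ENNReal.add_ne_top.2 ⟨hv, ENNReal.one_ne_top⟩)
    have h3 : ‖(F m - F n) k v‖ ≤ ε / 2 := by
      have := h1.trans h2
      rwa [← ofReal_norm_eq_coe_nnnorm,
        ENNReal.ofReal_le_ofReal_iff (by positivity)] at this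
    have h4 : (F m - F n) k v = F m k v - F n k v := rfl
    rw [dist_eq_norm, ← h4]
    exact lt_of_le_of_lt h3 (by linarith)
  have cauchy' : ∀ (k : ℤ) (v : D), CauchySeq fun n => F n k (v : E) :=
    fun k v => key k v v.2
  -- the limit functionals on D
  let L : ℤ → D →ₗ[ℝ] ℝ := fun k =>
    { toFun := fun v => limUnder atTop fun n => F n k (v : E)
      map_add' := by
        intro v w
        have h1 := (cauchy' k (v + w)).tendsto_limUnder
        have h2 := ((cauchy' k v).tendsto_limUnder).add ((cauchy' k w).tendsto_limUnder)
        exact tendsto_nhds_unique h1 (h2.congr fun n => by simp)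
      map_smul' := by
        intro c v
        have h1 := (cauchy' k (c • v)).tendsto_limUnder
        have h2 := ((cauchy' k v).tendsto_limUnder).const_mul c
        exact tendsto_nhds_unique h1 (h2.congr fun n => by simp) }
  have hL : ∀ (k : ℤ) (v : D), Tendsto (fun n => F n k (v : E)) atTop (𝓝 (L k v)) :=
    fun k v => (cauchy' k v).tendsto_limUnder
  -- extend to E using a complement of D
  obtain ⟨q, hq⟩ := Submodule.exists_isCompl D
  set Φ : ℤ → E →ₗ[ℝ] ℝ :=
    fun k => (L k).comp (Submodule.linearProjOfIsCompl D q hq) with hΦdef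
  have hΦv : ∀ (k : ℤ) (v : E), X.toFun v ≠ ∞ →
      Tendsto (fun n => F n k v) atTop (𝓝 (Φ k v)) := by
    intro k v hv
    have hmem : v ∈ D := hv
    have hproj : Submodule.linearProjOfIsCompl D q hq v = (⟨v, hmem⟩ : D) :=
      Submodule.linearProjOfIsCompl_apply_left hq ⟨v, hmem⟩
    have : Φ k v = L k ⟨v, hmem⟩ := by
      rw [hΦdef]
      simp only [LinearMap.coe_comp, Function.comp_apply, hproj]
    rw [this]
    exact hL k ⟨v, hmem⟩
  -- convergence of pairings
  have hconv : ∀ (x : ℤ → E) (hx : (Function.support x).Finite), S.toFun x ≤ 1 →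
      Tendsto (fun n => ∑ᶠ k : ℤ, F n k (x k)) atTop (𝓝 (∑ᶠ k : ℤ, Φ k (x k))) := by
    intro x hx hS
    have hfs : ∀ n, ∑ᶠ k : ℤ, F n k (x k) = ∑ k ∈ hx.toFinset, F n k (x k) :=
      fun n => finsum_eq_sum_of_support_subset _ (hsupp (F n) x hx)
    rw [finsum_eq_sum_of_support_subset _ (hsupp Φ x hx)]
    simp only [hfs]
    refine tendsto_finset_sum _ fun k _ => ?_
    exact hΦv k (x k) (ne_top_of_le_ne_top ENNReal.one_ne_top (hcoord hS k))
  -- the main eventual bound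
  have hbound : ∀ δ : ℝ≥0∞, 0 < δ → δ ≠ ∞ →
      ∃ n₀ : ℕ, ∀ n, n₀ ≤ n → dualSeqENorm S.toFun (F n - Φ) ≤ δ := by
    intro δ hδ hδt
    obtain ⟨n₀, hn₀⟩ := hcauchy δ hδ
    refine ⟨n₀, fun n hn => ?_⟩
    refine dualSeq_le fun x hx hS => ?_
    rw [hsub (F n) Φ x hx]
    have hnorm : ‖(∑ᶠ k : ℤ, F n k (x k)) - ∑ᶠ k : ℤ, Φ k (x k)‖ ≤ δ.toReal := by
      have htend : Tendsto
          (fun m => ‖(∑ᶠ k : ℤ, F n k (x k)) - ∑ᶠ k : ℤ, F m k (x k)‖) atTop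
          (𝓝 ‖(∑ᶠ k : ℤ, F n k (x k)) - ∑ᶠ k : ℤ, Φ k (x k)‖) :=
        (tendsto_const_nhds.sub (hconv x hx hS)).norm
      refine le_of_tendsto htend ?_
      filter_upwards [eventually_ge_atTop n₀] with m hm
      have h1 : (‖∑ᶠ k : ℤ, (F n - F m) k (x k)‖₊ : ℝ≥0∞)
          ≤ dualSeqENorm S.toFun (F n - F m) := pair_le_dual _ hx hS
      have h2 : (‖∑ᶠ k : ℤ, (F n - F m) k (x k)‖₊ : ℝ≥0∞) ≤ δ :=
        h1.trans (le_of_lt (hn₀ n hn m hm))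
      rw [← hsub (F n) (F m) x hx]
      rw [← ofReal_norm_eq_coe_nnnorm] at h2
      calc ‖∑ᶠ k : ℤ, (F n - F m) k (x k)‖
          = (ENNReal.ofReal ‖∑ᶠ k : ℤ, (F n - F m) k (x k)‖).toReal := by
            rw [ENNReal.toReal_ofReal (norm_nonneg _)]
        _ ≤ δ.toReal := ENNReal.toReal_mono hδt h2
    rw [← ofReal_norm_eq_coe_nnnorm]
    calc ENNReal.ofReal ‖(∑ᶠ k : ℤ, F n k (x k)) - ∑ᶠ k : ℤ, Φ k (x k)‖
        ≤ ENNReal.ofReal δ.toReal := ENNReal.ofReal_le_ofReal hnorm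
      _ = δ := ENNReal.ofReal_toReal hδt
  refine ⟨Φ, ?_, ?_⟩
  · -- finiteness of the limit's norm
    obtain ⟨n₀, hb⟩ := hbound 1 one_pos ENNReal.one_ne_top
    have h1 : dualSeqENorm S.toFun (Φ - F n₀) ≤ 1 := by
      rw [hneg Φ (F n₀)]; exact hb n₀ le_rfl
    have h2 : dualSeqENorm S.toFun Φ
        ≤ dualSeqENorm S.toFun (Φ - F n₀) + dualSeqENorm S.toFun (F n₀) := by
      have := part5 (Φ - F n₀) (F n₀)
      rwa [sub_add_cancel] at this
    exact ne_top_of_le_ne_top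
      (ENNReal.add_ne_top.2 ⟨ne_top_of_le_ne_top ENNReal.one_ne_top h1, hfin n₀⟩) h2
  · -- convergence to the limit
    rw [ENNReal.tendsto_nhds_zero]
    intro ε hε
    obtain ⟨n₀, hb⟩ := hbound (min ε 1) (lt_min hε one_pos)
      (ne_top_of_le_ne_top ENNReal.one_ne_top (min_le_right _ _))
    filter_upwards [eventually_ge_atTop n₀] with n hn
    exact (hb n hn).trans (min_le_left _ _)
end

section
/- Let (𝒳₀,𝒳₁) and (𝒴₀,𝒴₁) be compatible couples of sequentially structured Banach spaces. Suppose that X₀ + X₁ ⊆ Y₀ + Y₁ and that 𝔖_j ↪ 𝔗_j continuously for j = 0,1. Then (𝒳₀,𝒳₁)_θ ↪ (𝒴₀,𝒴₁)_θ continuously for every θ ∈ (0,1). -/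
open scoped ENNReal NNReal
open Filter Topology

universe u v

/-- embeddings. If `X₀ + X₁ ⊆ Y₀ + Y₁` (encoded by the injective
continuous inclusion `ι` of the sum spaces) and `𝔖_j ↪ 𝔗_j` continuously for `j = 0,1`,
then `(𝒳₀,𝒳₁)_θ ↪ (𝒴₀,𝒴₁)_θ` continuously for every `θ ∈ (0,1)`. -/
theorem statement10 {E : Type u} {F : Type v}
    [NormedAddCommGroup E] [NormedSpace ℝ E] [NormedAddCommGroup F] [NormedSpace ℝ F]
    (N₀ N₁ : BanachENorm ℝ E)
    (hcompE : ∀ v : E, enSum N₀.toFun N₁.toFun v = (‖v‖₊ : ℝ≥0∞))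
    (M₀ M₁ : BanachENorm ℝ F)
    (hcompF : ∀ w : F, enSum M₀.toFun M₁.toFun w = (‖w‖₊ : ℝ≥0∞))
    (S₀ : SeqStructure ℝ E N₀) (S₁ : SeqStructure ℝ E N₁)
    (T₀ : SeqStructure ℝ F M₀) (T₁ : SeqStructure ℝ F M₁)
    (ι : E →L[ℝ] F) (hι : Function.Injective ι)
    (h₀ : ∃ C : ℝ≥0∞, C ≠ ∞ ∧ ∀ x : ℤ → E,
      T₀.toFun (fun k => ι (x k)) ≤ C * S₀.toFun x)
    (h₁ : ∃ C : ℝ≥0∞, C ≠ ∞ ∧ ∀ x : ℤ → E,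
      T₁.toFun (fun k => ι (x k)) ≤ C * S₁.toFun x)
    (θ : ℝ) (hθ : θ ∈ Set.Ioo (0 : ℝ) 1) :
    ∃ C : ℝ≥0∞, C ≠ ∞ ∧ ∀ v : E,
      interpENorm T₀.toFun T₁.toFun θ (ι v) ≤ C * interpENorm S₀.toFun S₁.toFun θ v := by
  obtain ⟨C₀, hC₀, hle₀⟩ := h₀
  obtain ⟨C₁, hC₁, hle₁⟩ := h₁
  refine ⟨max C₀ C₁ + 1, by simp [hC₀, hC₁], fun v => ?_⟩
  have hne : max C₀ C₁ + 1 ≠ ∞ := by simp [hC₀, hC₁]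
  have hnz : max C₀ C₁ + 1 ≠ 0 := by simp
  unfold interpENorm
  rw [ENNReal.mul_iInf_of_ne hnz hne]
  refine le_iInf fun x => ?_
  rw [ENNReal.mul_iInf_of_ne hnz hne]
  refine le_iInf fun hx => ?_
  have hxι : HasSum (fun k => ι (x k)) (ι v) := hx.mapL ι
  refine le_trans (iInf₂_le (fun k => ι (x k)) hxι) ?_
  refine max_le ?_ ?_
  · refine le_trans ?_ (le_trans (mul_le_mul_right (le_max_left _ _) _)
      (mul_le_mul_left (le_trans (le_max_left _ _) le_self_add) _))
    have : (fun k => (Real.exp (-θ) ^ k) • ι (x k))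
        = fun k => ι ((Real.exp (-θ) ^ k) • x k) := by
      funext k; simp
    simpa [wtSeq, this] using hle₀ (fun k => (Real.exp (-θ) ^ k) • x k)
  · refine le_trans ?_ (le_trans (mul_le_mul_right (le_max_right _ _) _)
      (mul_le_mul_left (le_trans (le_max_right _ _) le_self_add) _))
    have : (fun k => (Real.exp (1 - θ) ^ k) • ι (x k))
        = fun k => ι ((Real.exp (1 - θ) ^ k) • x k) := by
      funext k; simp
    simpa [wtSeq, this] using hle₁ (fun k => (Real.exp (1 - θ) ^ k) • x k)
end

section
/- Let (𝒳₀,𝒳₁) be a compatible couple of sequentially structured Banach spaces such that for j = 0,1: (1) ‖(α_k x_k)_{k∈ℤ}‖_{𝔖_j} ≤ ‖α⃗‖_{ℓ∞(ℤ)} ‖x⃗‖_{𝔖_j} for all bounded scalar sequences α⃗ and x⃗ ∈ 𝔖_j, and (2) ‖T_σ x⃗‖_{𝔖_j} ≤ ‖x⃗‖_{𝔖_j} for all x⃗ ∈ 𝔖_j and all σ ∈ π(ℤ). Then for all a, b ∈ (1,∞) and θ ∈ (0,1) one has (𝒳₀,𝒳₁)_{θ;a} = (𝒳₀,𝒳₁)_{θ;b}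 with equivalent norms. -/
open scoped ENNReal NNReal
open Filter Topology

universe u v

lemma ban_zero {V : Type*} [AddCommGroup V] [Module ℝ V] {N : V → ℝ≥0∞}
    (h : IsBanachENorm ℝ N) : N 0 = 0 :=
  le_antisymm (by simpa using h.2.2.1 (0:ℝ) 0) zero_le

lemma ban_sum_le {V : Type*} [AddCommGroup V] [Module ℝ V] {N : V → ℝ≥0∞}
    (h : IsBanachENorm ℝ N) {ι : Type*} (s : Finset ι) (f : ι → V) :
    N (∑ i ∈ s, f i) ≤ ∑ i ∈ s, N (f i) := by
  classical
  induction s using Finset.induction_on with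
  | empty => simp [ban_zero h]
  | insert _ _ hx ih =>
      rw [Finset.sum_insert hx, Finset.sum_insert hx]
      exact le_trans (h.2.1 _ _) (add_le_add le_rfl ih)

lemma le_mul_iInf' {ι : Sort*} {f : ι → ℝ≥0∞} {C L : ℝ≥0∞} (hC0 : C ≠ 0) (hC : C ≠ ∞)
    (h : ∀ i, L ≤ C * f i) : L ≤ C * ⨅ i, f i := by
  have h1 : L / C ≤ ⨅ i, f i :=
    le_iInf fun i => (ENNReal.div_le_iff_le_mul (Or.inl hC0) (Or.inl hC)).2
      (by rw [mul_comm]; exact h i)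
  calc L = C * (L / C) := (ENNReal.mul_div_cancel hC0 hC).symm
    _ ≤ C * ⨅ i, f i := mul_le_mul_right h1 C

lemma oneDirection {E : Type u} [NormedAddCommGroup E] [NormedSpace ℝ E]
    {N₀ N₁ : BanachENorm ℝ E}
    (S₀ : SeqStructure ℝ E N₀) (S₁ : SeqStructure ℝ E N₁)
    (hmul₀ : ∀ α : ℤ → ℝ, (∃ M : ℝ, ∀ k, |α k| ≤ M) → ∀ x : ℤ → E,
      S₀.toFun (fun k => α k • x k) ≤ (⨆ k : ℤ, (‖α k‖₊ : ℝ≥0∞)) * S₀.toFun x)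
    (hmul₁ : ∀ α : ℤ → ℝ, (∃ M : ℝ, ∀ k, |α k| ≤ M) → ∀ x : ℤ → E,
      S₁.toFun (fun k => α k • x k) ≤ (⨆ k : ℤ, (‖α k‖₊ : ℝ≥0∞)) * S₁.toFun x)
    (hσ₀ : ∀ σ : ℤ → Option ℤ,
      (∀ k₁ k₂ n : ℤ, σ k₁ = some n → σ k₂ = some n → k₁ = k₂) →
      ∀ x : ℤ → E, S₀.toFun (fun k => (σ k).elim 0 x) ≤ S₀.toFun x)
    (hσ₁ : ∀ σ : ℤ → Option ℤ,
      (∀ k₁ k₂ n : ℤ, σ k₁ = some n → σ k₂ = some n → k₁ = k₂) →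
      ∀ x : ℤ → E, S₁.toFun (fun k => (σ k).elim 0 x) ≤ S₁.toFun x)
    (a b : ℝ) (ha : 1 < a) (hb : 1 < b)
    (θ : ℝ) (hθ : θ ∈ Set.Ioo (0 : ℝ) 1) :
    ∃ C : ℝ≥0∞, C ≠ 0 ∧ C ≠ ∞ ∧ ∀ v : E,
      interpENormB a S₀.toFun S₁.toFun θ v ≤ C * interpENormB b S₀.toFun S₁.toFun θ v := by
  classical
  have ha0 : (0:ℝ) < a := lt_trans one_pos ha
  have hb0 : (0:ℝ) < b := lt_trans one_pos hb
  set L := Real.log a with hLdef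
  set M := Real.log b with hMdef
  have hLpos : 0 < L := Real.log_pos ha
  have hMpos : 0 < M := Real.log_pos hb
  set ι : ℤ → ℤ := fun k => ⌊(k : ℝ) * M / L⌋ with hιdef
  have hbr : ∀ k : ℤ, (ι k : ℝ) * L ≤ (k:ℝ) * M ∧ (k:ℝ) * M < ((ι k : ℝ) + 1) * L := by
    intro k
    have h1 := Int.floor_le ((k : ℝ) * M / L)
    have h2 := Int.lt_floor_add_one ((k : ℝ) * M / L)
    constructor
    · have := mul_le_mul_of_nonneg_right h1 hLpos.le
      rwa [div_mul_cancel₀ _ hLpos.ne'] at this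
    · have := mul_lt_mul_of_pos_right h2 hLpos
      rwa [div_mul_cancel₀ _ hLpos.ne'] at this
  set p : ℤ := ⌈L / M⌉ with hpdef
  have hp1 : 1 ≤ p := by
    have : (0:ℤ) < p := Int.ceil_pos.2 (div_pos hLpos hMpos)
    omega
  have hLMp : L / M ≤ (p:ℝ) := Int.le_ceil _
  set P : ℕ := p.toNat with hPdef
  have hPp : (P:ℤ) = p := Int.toNat_of_nonneg (by omega)
  have hP1 : 1 ≤ P := by omega
  -- uniqueness
  have huniq : ∀ k k' : ℤ, ι k = ι k' → k % p = k' % p → k = k' := by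
    intro k k' h1 h2
    have hb1 := hbr k
    have hb2 := hbr k'
    rw [h1] at hb1
    have habs : |(k:ℝ)*M - (k':ℝ)*M| < L :=
      abs_sub_lt_iff.2 ⟨by linarith [hb1.1, hb1.2, hb2.1, hb2.2],
        by linarith [hb1.1, hb1.2, hb2.1, hb2.2]⟩
    have h3 : |((k - k' : ℤ) : ℝ)| * M < L := by
      push_cast
      calc |(k:ℝ) - (k':ℝ)| * M = |((k:ℝ) - (k':ℝ)) * M| := by
            rw [abs_mul, abs_of_pos hMpos]
        _ = |(k:ℝ)*M - (k':ℝ)*M| := by rw [sub_mul]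
        _ < L := habs
    have h4 : |k - k'| < p := by
      have h5 : |((k - k' : ℤ) : ℝ)| < (p:ℝ) :=
        lt_of_lt_of_le ((lt_div_iff₀ hMpos).2 h3) hLMp
      exact_mod_cast h5
    have hdvd : p ∣ k' - k := Int.ModEq.dvd h2
    have h6 : k' - k = 0 :=
      Int.eq_zero_of_abs_lt_dvd hdvd (by rwa [abs_sub_comm] at h4)
    omega
  set σ : ℕ → ℤ → Option ℤ :=
    fun r m => if h : ∃ k : ℤ, ι k = m ∧ k % p = (r:ℤ) then some h.choose else none
    with hσdef
  have hσspec : ∀ r m k, σ r m = some k → ι k = m ∧ k % p = (r:ℤ) := by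
    intro r m k h
    simp only [hσdef] at h
    split_ifs at h with hex
    · obtain ⟨h1, h2⟩ := hex.choose_spec
      injection h with h
      exact h ▸ ⟨h1, h2⟩
  have hσall : ∀ k : ℤ, σ (k % p).toNat (ι k) = some k := by
    intro k
    have hmod : (((k % p).toNat : ℤ)) = k % p :=
      Int.toNat_of_nonneg (Int.emod_nonneg k (by omega))
    have hex : ∃ k' : ℤ, ι k' = ι k ∧ k' % p = (((k % p).toNat : ℕ) : ℤ) :=
      ⟨k, rfl, by rw [hmod]⟩
    simp only [hσdef]
    rw [dif_pos hex]
    exact congrArg some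
      (huniq _ _ hex.choose_spec.1 (hex.choose_spec.2.trans hmod))
  have hσinj : ∀ r : ℕ, ∀ k₁ k₂ n : ℤ, σ r k₁ = some n → σ r k₂ = some n → k₁ = k₂ :=
    fun r k₁ k₂ n h1 h2 => (hσspec r k₁ n h1).1.symm.trans (hσspec r k₂ n h2).1
  have hfin : ∀ m : ℤ, {k : ℤ | ι k = m}.Finite := by
    intro m
    apply Set.Finite.subset (Set.finite_Icc ⌈(m:ℝ)*L/M⌉ ⌈((m:ℝ)+1)*L/M⌉)
    intro k hk
    simp only [Set.mem_setOf_eq] at hk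
    have hbk := hbr k
    rw [hk] at hbk
    constructor
    · exact Int.ceil_le.2 ((div_le_iff₀ hMpos).2 hbk.1)
    · refine Int.cast_le.1 (le_trans ?_ (Int.le_ceil (((m:ℝ)+1)*L/M)))
      exact le_of_lt ((lt_div_iff₀ hMpos).2 hbk.2)
  letI instF : ∀ m : ℤ, Fintype {k : ℤ // ι k = m} := fun m => (hfin m).fintype
  set C : ℝ≥0∞ := (P : ℝ≥0∞) * ENNReal.ofReal a with hCdef
  have hC0 : C ≠ 0 := by
    apply mul_ne_zero
    · simp only [ne_eq, Nat.cast_eq_zero]; omega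
    · exact (ENNReal.ofReal_pos.2 ha0).ne'
  have hCt : C ≠ ∞ := by
    apply ENNReal.mul_ne_top (by simp) ENNReal.ofReal_ne_top
  refine ⟨C, hC0, hCt, fun v => ?_⟩
  rw [interpENormB, interpENormB]
  apply le_mul_iInf' hC0 hCt
  intro x
  by_cases hx : HasSum x v
  swap
  · rw [iInf_neg hx, ENNReal.mul_top hC0]; exact le_top
  rw [iInf_pos hx]
  set y : ℤ → E := fun m => ∑ k : {k : ℤ // ι k = m}, x k.1 with hydef
  have hy : HasSum y v :=
    HasSum.sigma ((Equiv.sigmaFiberEquiv ι).hasSum_iff.mpr hx)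
      (fun m => hasSum_fintype _)
  have hyr : ∀ m : ℤ, y m = ∑ r ∈ Finset.range P, (σ r m).elim 0 x := by
    intro m
    refine Finset.sum_bij_ne_zero (fun k _ _ => (k.1 % p).toNat) ?_ ?_ ?_ ?_
    · intro k _ _
      rw [Finset.mem_range]
      have h1 := Int.emod_nonneg k.1 (show p ≠ 0 by omega)
      have h2 := Int.emod_lt_of_pos k.1 (show 0 < p by omega)
      show (k.1 % p).toNat < P
      omega
    · intro k₁ _ _ k₂ _ _ hr
      have hr' : (k₁.1 % p).toNat = (k₂.1 % p).toNat := hr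
      have h1 := Int.emod_nonneg k₁.1 (show p ≠ 0 by omega)
      have h2 := Int.emod_nonneg k₂.1 (show p ≠ 0 by omega)
      exact Subtype.ext (huniq _ _ (k₁.2.trans k₂.2.symm) (by omega))
    · intro r hr hne
      cases hsm : σ r m with
      | none => rw [hsm] at hne; simp at hne
      | some k =>
          obtain ⟨hk1, hk2⟩ := hσspec r m k hsm
          refine ⟨⟨k, hk1⟩, Finset.mem_univ _, ?_, ?_⟩
          · rw [hsm] at hne; simpa using hne
          · show (k % p).toNat = r
            omega
    · intro k _ _
      have := hσall k.1
      rw [k.2] at this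
      rw [this]
      rfl
  have key : ∀ (N : BanachENorm ℝ E) (S : SeqStructure ℝ E N),
      (∀ α : ℤ → ℝ, (∃ M : ℝ, ∀ k, |α k| ≤ M) → ∀ x : ℤ → E,
        S.toFun (fun k => α k • x k) ≤ (⨆ k : ℤ, (‖α k‖₊ : ℝ≥0∞)) * S.toFun x) →
      (∀ τ : ℤ → Option ℤ,
        (∀ k₁ k₂ n : ℤ, τ k₁ = some n → τ k₂ = some n → k₁ = k₂) →
        ∀ x : ℤ → E, S.toFun (fun k => (τ k).elim 0 x) ≤ S.toFun x) →
      ∀ e : ℝ, |e| ≤ 1 →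
      wtSeq (a ^ e) S.toFun y ≤ C * wtSeq (b ^ e) S.toFun x := by
    intro N S hmul hσS e he
    set c : ℝ := a ^ e with hcdef
    set d : ℝ := b ^ e with hddef
    have hc0 : 0 < c := Real.rpow_pos_of_pos ha0 e
    have hd0 : 0 < d := Real.rpow_pos_of_pos hb0 e
    set α : ℤ → ℝ := fun k => c ^ (ι k) * (d ^ k)⁻¹ with hαdef
    have hαval : ∀ k : ℤ, α k = Real.exp (-e * ((k:ℝ)*M - (ι k:ℝ)*L)) := by
      intro k
      have h1 : c ^ (ι k) = a ^ (e * ((ι k : ℤ):ℝ)) := by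
        rw [Real.rpow_mul ha0.le, Real.rpow_intCast]
      have h2 : d ^ k = b ^ (e * ((k : ℤ):ℝ)) := by
        rw [Real.rpow_mul hb0.le, Real.rpow_intCast]
      rw [hαdef]
      simp only
      rw [h1, h2, Real.rpow_def_of_pos ha0, Real.rpow_def_of_pos hb0,
        ← Real.exp_neg, ← Real.exp_add]
      congr 1
      ring
    have hα : ∀ k : ℤ, |α k| ≤ a := by
      intro k
      rw [hαval k, Real.abs_exp]
      refine le_trans (Real.exp_le_exp.2 ?_) (le_of_eq (Real.exp_log ha0))
      have hbk := hbr k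
      have ht0 : 0 ≤ (k:ℝ)*M - (ι k:ℝ)*L := by linarith [hbk.1]
      have htL : (k:ℝ)*M - (ι k:ℝ)*L ≤ L := by nlinarith [hbk.2]
      have h1 : -e ≤ |e| := neg_le_abs e
      nlinarith [abs_nonneg e]
    have step3 : ∀ r : ℕ, S.toFun (fun m => c ^ m • (σ r m).elim 0 x) ≤
        ENNReal.ofReal a * S.toFun (fun k => d ^ k • x k) := by
      intro r
      have e1 : (fun m => c ^ m • (σ r m).elim 0 x) =
          fun m => (σ r m).elim 0 (fun k => c ^ (ι k) • x k) := by
        funext m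
        cases hsm : σ r m with
        | none => simp
        | some k =>
            simp only [Option.elim]
            rw [(hσspec r m k hsm).1]
      have e2 : (fun k => c ^ (ι k) • x k) = fun k => α k • ((d ^ k) • x k) := by
        funext k
        rw [smul_smul]
        congr 1
        rw [hαdef]
        simp only
        rw [mul_assoc, inv_mul_cancel₀ (zpow_ne_zero k hd0.ne'), mul_one]
      calc S.toFun (fun m => c ^ m • (σ r m).elim 0 x)
          = S.toFun (fun m => (σ r m).elim 0 (fun k => c ^ (ι k) • x k)) := by rw [e1]
        _ ≤ S.toFun (fun k => c ^ (ι k) • x k) := hσS (σ r) (hσinj r) _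
        _ = S.toFun (fun k => α k • ((d ^ k) • x k)) := by rw [e2]
        _ ≤ (⨆ k : ℤ, (‖α k‖₊ : ℝ≥0∞)) * S.toFun (fun k => d ^ k • x k) :=
            hmul α ⟨a, hα⟩ _
        _ ≤ ENNReal.ofReal a * S.toFun (fun k => d ^ k • x k) := by
            refine mul_le_mul_left (iSup_le fun k => ?_) _
            rw [← ENNReal.ofReal_coe_nnreal, coe_nnnorm]
            exact ENNReal.ofReal_le_ofReal (by rw [Real.norm_eq_abs]; exact hα k)
    have step1 : (fun m => c ^ m • y m) =
        ∑ r ∈ Finset.range P, (fun m => c ^ m • (σ r m).elim 0 x) := by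
      funext m
      rw [Finset.sum_apply, hyr m, Finset.smul_sum]
    calc wtSeq (a ^ e) S.toFun y = S.toFun (fun m => c ^ m • y m) := rfl
      _ = S.toFun (∑ r ∈ Finset.range P, (fun m => c ^ m • (σ r m).elim 0 x)) := by
          rw [← step1]
      _ ≤ ∑ r ∈ Finset.range P, S.toFun (fun m => c ^ m • (σ r m).elim 0 x) :=
          ban_sum_le S.isBanachENorm _ _
      _ ≤ ∑ _r ∈ Finset.range P, ENNReal.ofReal a * S.toFun (fun k => d ^ k • x k) :=
          Finset.sum_le_sum (fun r _ => step3 r)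
      _ = C * wtSeq (b ^ e) S.toFun x := by
          rw [Finset.sum_const, Finset.card_range, nsmul_eq_mul, hCdef, mul_assoc]
          rfl
  have habs0 : |(-θ : ℝ)| ≤ 1 := by
    rw [abs_of_nonpos (by linarith [hθ.1])]
    linarith [hθ.2]
  have habs1 : |(1 - θ : ℝ)| ≤ 1 := by
    rw [abs_of_nonneg (by linarith [hθ.2])]
    linarith [hθ.1]
  calc (⨅ (x' : ℤ → E) (_ : HasSum x' v),
        max (wtSeq (a ^ (-θ)) S₀.toFun x') (wtSeq (a ^ (1-θ)) S₁.toFun x'))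
      ≤ max (wtSeq (a ^ (-θ)) S₀.toFun y) (wtSeq (a ^ (1-θ)) S₁.toFun y) := iInf₂_le y hy
    _ ≤ max (C * wtSeq (b ^ (-θ)) S₀.toFun x) (C * wtSeq (b ^ (1-θ)) S₁.toFun x) :=
        max_le_max (key N₀ S₀ hmul₀ hσ₀ (-θ) habs0) (key N₁ S₁ hmul₁ hσ₁ (1-θ) habs1)
    _ ≤ C * max (wtSeq (b ^ (-θ)) S₀.toFun x) (wtSeq (b ^ (1-θ)) S₁.toFun x) :=
        max_le (mul_le_mul_right (le_max_left _ _) C)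
          (mul_le_mul_right (le_max_right _ _) C)

/-- change of base number. If the sequence structures of a compatible
couple are stable under bounded scalar multipliers and under the insertion/deletion
operators `T_σ`, `σ ∈ π(ℤ)` (encoded as `σ : ℤ → Option ℤ` with at most one preimage for
each integer), then `(𝒳₀,𝒳₁)_{θ;a} = (𝒳₀,𝒳₁)_{θ;b}` with equivalent norms for all base
numbers `a, b ∈ (1,∞)` and all `θ ∈ (0,1)`. -/
theorem statement11 {E : Type u} [NormedAddCommGroup E] [NormedSpace ℝ E]
    (N₀ N₁ : BanachENorm ℝ E)
    (hcomp : ∀ v : E, enSum N₀.toFun N₁.toFun v = (‖v‖₊ : ℝ≥0∞))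
    (S₀ : SeqStructure ℝ E N₀) (S₁ : SeqStructure ℝ E N₁)
    (hmul₀ : ∀ α : ℤ → ℝ, (∃ M : ℝ, ∀ k, |α k| ≤ M) → ∀ x : ℤ → E,
      S₀.toFun (fun k => α k • x k) ≤ (⨆ k : ℤ, (‖α k‖₊ : ℝ≥0∞)) * S₀.toFun x)
    (hmul₁ : ∀ α : ℤ → ℝ, (∃ M : ℝ, ∀ k, |α k| ≤ M) → ∀ x : ℤ → E,
      S₁.toFun (fun k => α k • x k) ≤ (⨆ k : ℤ, (‖α k‖₊ : ℝ≥0∞)) * S₁.toFun x)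
    (hσ₀ : ∀ σ : ℤ → Option ℤ,
      (∀ k₁ k₂ n : ℤ, σ k₁ = some n → σ k₂ = some n → k₁ = k₂) →
      ∀ x : ℤ → E, S₀.toFun (fun k => (σ k).elim 0 x) ≤ S₀.toFun x)
    (hσ₁ : ∀ σ : ℤ → Option ℤ,
      (∀ k₁ k₂ n : ℤ, σ k₁ = some n → σ k₂ = some n → k₁ = k₂) →
      ∀ x : ℤ → E, S₁.toFun (fun k => (σ k).elim 0 x) ≤ S₁.toFun x)
    (a b : ℝ) (ha : 1 < a) (hb : 1 < b)
    (θ : ℝ) (hθ : θ ∈ Set.Ioo (0 : ℝ) 1) :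
    ∃ C : ℝ≥0∞, C ≠ ∞ ∧ ∀ v : E,
      (interpENormB a S₀.toFun S₁.toFun θ v ≤ C * interpENormB b S₀.toFun S₁.toFun θ v) ∧
      (interpENormB b S₀.toFun S₁.toFun θ v ≤ C * interpENormB a S₀.toFun S₁.toFun θ v) := by
  obtain ⟨C₁, _, hC₁t, h₁⟩ :=
    oneDirection S₀ S₁ hmul₀ hmul₁ hσ₀ hσ₁ a b ha hb θ hθ
  obtain ⟨C₂, _, hC₂t, h₂⟩ :=
    oneDirection S₀ S₁ hmul₀ hmul₁ hσ₀ hσ₁ b a hb ha θ hθ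
  exact ⟨C₁ + C₂, ENNReal.add_ne_top.2 ⟨hC₁t, hC₂t⟩, fun v =>
    ⟨(h₁ v).trans (mul_le_mul_left le_self_add _),
     (h₂ v).trans (mul_le_mul_left le_add_self _)⟩⟩
end

section
/- Let (𝒳₀,𝒳₁) be a compatible couple of sequentially structured Banach spaces and let θ ∈ (0,1). The map f ↦ f̂_θ is an isometric isomorphism from ℋ_π(𝕊;𝒳₀,𝒳₁) onto 𝔖₀(e^{−θ}) ∩ 𝔖₁(e^{1−θ}), with inverse x⃗ ↦ (z ↦ Σ_{k∈ℤ} e^{k(z−θ)} x_k). -/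
open scoped ENNReal NNReal
open Filter Topology

universe u v

/-!
The coordinate bounds of the sequence structures, together with the embeddings `Xⱼ ↪ X₀ + X₁`,
give `‖x_k‖ ≤ C min(e^{θk}, e^{(θ-1)k})` for every `x⃗ ∈ 𝔖₀(e^{-θ}) ∩ 𝔖₁(e^{1-θ})`. Hence
`g(z) = ∑_k e^{k(z-θ)} x_k` converges locally uniformly on `𝕊` to a `2πi`-periodic analytic
function, and integrating termwise gives `ĝ_s(k) = e^{k(s-θ)} x_k`.

Conversely, for `f ∈ ℋ_π(𝕊;𝒳₀,𝒳₁)` Cauchy's theorem for `e^{-kw} f(w)` on the rectangle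
`[θ, s] × [-π, π]`, whose horizontal sides cancel by periodicity, gives
`f̂_s(k) = e^{k(s-θ)} f̂_θ(k)`. So `f` and the series built from `f̂_θ` have the same Fourier
coefficients on every vertical line, and a continuous periodic function is determined by its
Fourier coefficients (test against functionals and use the scalar Fourier series on the circle).
-/

open Complex Real Set

section NormBounds

variable {𝕜 E : Type*} [NormedField 𝕜]

theorem BanachENorm.toFun_zero [AddCommGroup E] [Module 𝕜 E] (N : BanachENorm 𝕜 E) :
    N.toFun 0 = 0 := by
  simpa using N.isBanachENorm.2.2.1 0 0

theorem enSum_le_left [AddCommGroup E] {N M : E → ℝ≥0∞} (hM : M 0 = 0) (v : E) :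
    enSum N M v ≤ N v := by
  simpa [enSum, hM] using iInf_le (fun w => N w + M (v - w)) v

theorem enSum_le_right [AddCommGroup E] {N M : E → ℝ≥0∞} (hN : N 0 = 0) (v : E) :
    enSum N M v ≤ M v := by
  simpa [enSum, hN] using iInf_le (fun w => N w + M (v - w)) 0

variable [NormedAddCommGroup E]

theorem SeqStructure.norm_le_wtSeq_exp [Module 𝕜 E] [NormedSpace ℝ E] {N : BanachENorm 𝕜 E}
    (S : SeqStructure 𝕜 E N) (hN : ∀ v, (‖v‖₊ : ℝ≥0∞) ≤ N.toFun v)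
    {c : ℝ} {x : ℤ → E} (hx : wtSeq (Real.exp c) S.toFun x ≠ ∞) (k : ℤ) :
    ‖x k‖ ≤ (wtSeq (Real.exp c) S.toFun x).toReal * Real.exp (-c * k) := by
  have hk : ‖Real.exp c ^ k • x k‖ ≤ (wtSeq (Real.exp c) S.toFun x).toReal := by
    have := (hN _).trans (S.coord (fun k => Real.exp c ^ k • x k) k)
    simpa using ENNReal.toReal_mono hx this
  rw [norm_smul, ← Real.rpow_intCast, ← Real.exp_mul, Real.norm_of_nonneg (Real.exp_nonneg _)]
    at hk
  calc ‖x k‖ = Real.exp (c * k) * ‖x k‖ * Real.exp (-c * k) := by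
        rw [mul_right_comm, ← Real.exp_add, neg_mul, add_neg_cancel, Real.exp_zero, one_mul]
    _ ≤ _ := by gcongr

/-- Bounded by `C` in `ℓ^∞(e^{-θ}) ∩ ℓ^∞(e^{1-θ})`. -/
def StripBound (θ C : ℝ) (x : ℤ → E) : Prop :=
  ∀ k : ℤ, ‖x k‖ ≤ C * Real.exp (θ * k) ∧ ‖x k‖ ≤ C * Real.exp ((θ - 1) * k)

theorem StripBound.nonneg {θ C : ℝ} {x : ℤ → E} (hx : StripBound θ C x) : 0 ≤ C :=
  nonneg_of_mul_nonneg_left ((norm_nonneg _).trans (hx 0).1) (Real.exp_pos _)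

theorem SeqStructure.exists_stripBound [Module 𝕜 E] [NormedSpace ℝ E] {N₀ N₁ : BanachENorm 𝕜 E}
    (S₀ : SeqStructure 𝕜 E N₀) (S₁ : SeqStructure 𝕜 E N₁)
    (hN₀ : ∀ v, (‖v‖₊ : ℝ≥0∞) ≤ N₀.toFun v) (hN₁ : ∀ v, (‖v‖₊ : ℝ≥0∞) ≤ N₁.toFun v)
    {θ : ℝ} {x : ℤ → E}
    (hx : max (wtSeq (Real.exp (-θ)) S₀.toFun x) (wtSeq (Real.exp (1 - θ)) S₁.toFun x) ≠ ∞) :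
    ∃ C, StripBound θ C x := by
  rw [Ne, max_eq_top, not_or] at hx
  obtain ⟨hx₀, hx₁⟩ := hx
  refine ⟨max (wtSeq (Real.exp (-θ)) S₀.toFun x).toReal
    (wtSeq (Real.exp (1 - θ)) S₁.toFun x).toReal, fun k => ⟨?_, ?_⟩⟩
  · refine (S₀.norm_le_wtSeq_exp hN₀ hx₀ k).trans ?_
    rw [neg_neg]
    gcongr
    exact le_max_left _ _
  · refine (S₁.norm_le_wtSeq_exp hN₁ hx₁ k).trans ?_
    rw [neg_sub]
    gcongr
    exact le_max_right _ _

end NormBounds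

section FourierSeries

theorem integral_exp_int_mul_I (n : ℤ) :
    ∫ t in (-π)..π, Complex.exp (n * I * t) = if n = 0 then 2 * (π : ℂ) else 0 := by
  split_ifs with hn
  · simp [hn, two_mul]
  · have hc : (n : ℂ) * I ≠ 0 := mul_ne_zero (by exact_mod_cast hn) I_ne_zero
    rw [integral_exp_mul_complex hc, div_eq_zero_iff, sub_eq_zero]
    left
    have : (n : ℂ) * I * π = n * I * ((-π : ℝ) : ℂ) + n * (2 * π * I) := by push_cast; ring
    rw [this, Complex.exp_add, exp_int_mul_two_pi_mul_I, mul_one]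

theorem eq_zero_of_forall_integral_exp_mul_eq_zero {v : ℝ → ℂ} (hv : Continuous v)
    (hper : Function.Periodic v (2 * π))
    (h : ∀ k : ℤ, ∫ t in (-π)..π, Complex.exp (-k * I * t) * v t = 0) (t : ℝ) : v t = 0 := by
  have : Fact (0 < 2 * π) := ⟨by positivity⟩
  let V : C(AddCircle (2 * π), ℂ) := ⟨hper.lift, continuous_coinduced_dom.mpr hv⟩
  have hcoef : fourierCoeff V = 0 := by
    ext n
    calc fourierCoeff V n
        = (1 / (2 * π)) • ∫ x in (-π)..π, Complex.exp (-n * I * x) * v x := by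
          rw [fourierCoeff_eq_intervalIntegral _ _ (-π), show -π + 2 * π = π by ring]
          congr 1
          refine intervalIntegral.integral_congr fun x _ => ?_
          simp only [V, ContinuousMap.coe_mk, Function.Periodic.lift_coe, fourier_coe_apply,
            smul_eq_mul]
          congr 2
          field_simp
          push_cast
          ring
      _ = 0 := by rw [h n, smul_zero]
  have hV := hasSum_fourier_series_of_summable (hcoef ▸ summable_zero : Summable (fourierCoeff V))
  simp only [hcoef, Pi.zero_apply, zero_smul] at hV
  exact DFunLike.congr_fun (hasSum_zero.unique hV).symm (t : AddCircle (2 * π))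

variable {E : Type*} [NormedAddCommGroup E] [NormedSpace ℂ E] [CompleteSpace E]

theorem eq_zero_of_forall_integral_exp_smul_eq_zero {u : ℝ → E} (hu : Continuous u)
    (hper : Function.Periodic u (2 * π))
    (h : ∀ k : ℤ, ∫ t in (-π)..π, Complex.exp (-k * I * t) • u t = 0) (t : ℝ) : u t = 0 := by
  refine SeparatingDual.eq_zero_of_forall_dual_eq_zero (R := ℂ) fun φ => ?_
  refine eq_zero_of_forall_integral_exp_mul_eq_zero (φ.continuous.comp hu)
    (fun t => by simp [hper t]) (fun k => ?_) t
  have hint : IntervalIntegrable (fun t : ℝ => Complex.exp (-k * I * t) • u t)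
      MeasureTheory.volume (-π) π :=
    (by fun_prop : Continuous fun t : ℝ => Complex.exp (-k * I * t) • u t).intervalIntegrable _ _
  have hφ := φ.intervalIntegral_comp_comm hint
  rw [h k, map_zero] at hφ
  simpa using hφ

theorem integral_exp_smul_tsum_exp_smul {c : ℤ → E} (hc : Summable fun m => ‖c m‖) (k : ℤ) :
    ∫ t in (-π)..π, Complex.exp (-k * I * t) • ∑' m : ℤ, Complex.exp (m * I * t) • c m =
      (2 * π : ℂ) • c k := by
  let f : ℤ → C(ℝ, E) := fun m => ⟨fun t => Complex.exp ((m - k : ℤ) * I * t) • c m, by fun_prop⟩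
  have hf : Summable fun m =>
      ‖(f m).restrict (⟨uIcc (-π) π, isCompact_uIcc⟩ : TopologicalSpace.Compacts ℝ)‖ := by
    refine hc.of_nonneg_of_le (fun _ => norm_nonneg _) fun m => ?_
    refine (ContinuousMap.norm_le _ (norm_nonneg _)).2 fun t => ?_
    simp [f, norm_smul, Complex.norm_exp]
  have hterm (m : ℤ) : ∫ t in (-π)..π, f m t = if m = k then (2 * π : ℂ) • c k else 0 := by
    simp only [f, ContinuousMap.coe_mk, intervalIntegral.integral_smul_const,
      integral_exp_int_mul_I, sub_eq_zero]
    split_ifs with h <;> simp [h]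
  have hsum := intervalIntegral.hasSum_intervalIntegral_of_summable_norm hf
  simp only [hterm] at hsum
  rw [(hasSum_ite_eq k _).unique hsum]
  refine intervalIntegral.integral_congr fun t _ => ?_
  have hsummable : Summable fun m : ℤ => Complex.exp (m * I * t) • c m :=
    hc.of_norm_bounded fun m => by simp [norm_smul, Complex.norm_exp]
  rw [← hsummable.tsum_const_smul]
  refine tsum_congr fun m => ?_
  simp only [f, ContinuousMap.coe_mk, smul_smul, ← Complex.exp_add]
  push_cast
  ring_nf

end FourierSeries

section Strip

open scoped Interval

theorem mem_openStrip {z : ℂ} : z ∈ openStrip ↔ z.re ∈ Ioo 0 1 := Iff.rfl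

theorem add_mul_I_mem_openStrip {s : ℝ} (hs : s ∈ Ioo 0 1) (t : ℝ) :
    (s + t * I : ℂ) ∈ openStrip := by
  simpa [mem_openStrip] using hs

theorem exists_pos_lt_re_lt {z : ℂ} (hz : z ∈ openStrip) :
    ∃ δ : ℝ, 0 < δ ∧ δ < z.re ∧ z.re < 1 - δ := by
  obtain ⟨h₀, h₁⟩ := hz
  refine ⟨min z.re (1 - z.re) / 2, by positivity, ?_, ?_⟩ <;>
    linarith [min_le_left z.re (1 - z.re), min_le_right z.re (1 - z.re)]

variable {E : Type*} [NormedAddCommGroup E] [NormedSpace ℂ E]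

theorem continuous_comp_add_mul_I {f : ℂ → E} (hf : ∀ z ∈ openStrip, DifferentiableAt ℂ f z)
    {s : ℝ} (hs : s ∈ Ioo 0 1) : Continuous fun t : ℝ => f (s + t * I) :=
  (continuousOn_of_forall_continuousAt fun z hz => (hf z hz).continuousAt).comp_continuous
    (by fun_prop) (add_mul_I_mem_openStrip hs)

theorem integral_exp_smul_eq_fourierCoef (f : ℂ → E) (s : ℝ) (k : ℤ) :
    ∫ t in (-π)..π, Complex.exp (-k * I * t) • f (s + t * I) =
      (2 * π : ℂ) • fourierCoef f s k := by
  rw [fourierCoef, smul_smul, mul_inv_cancel₀ (by simp [pi_ne_zero]), one_smul]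

theorem integral_vertical_eq_of_eqOn_horizontal {F : ℂ → E} {a b c d : ℝ}
    (hF : DifferentiableOn ℂ F ([[a, b]] ×ℂ [[c, d]]))
    (hcd : ∀ x ∈ [[a, b]], F (↑x + ↑c * I) = F (↑x + ↑d * I)) :
    ∫ y in c..d, F (a + y * I) = ∫ y in c..d, F (b + y * I) := by
  have h := integral_boundary_rect_eq_zero_of_differentiableOn F (a + c * I) (b + d * I)
    (by simpa using hF)
  simp only [add_re, ofReal_re, mul_re, I_re, mul_zero, ofReal_im, I_im, mul_one, sub_self,
    add_zero, add_im, mul_im, zero_add] at h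
  rw [intervalIntegral.integral_congr fun x hx => hcd x hx, sub_self, zero_add, sub_eq_zero] at h
  exact (smul_right_injective E I_ne_zero h).symm

theorem fourierCoef_eq_exp_smul_fourierCoef {f : ℂ → E}
    (hf : ∀ z ∈ openStrip, DifferentiableAt ℂ f z)
    (hper : ∀ z ∈ openStrip, f (z + 2 * π * I) = f z)
    {s θ : ℝ} (hs : s ∈ Ioo 0 1) (hθ : θ ∈ Ioo 0 1) (k : ℤ) :
    fourierCoef f s k = Complex.exp (k * (s - θ)) • fourierCoef f θ k := by
  set F : ℂ → E := fun w => Complex.exp (-k * w) • f w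
  have hline (σ : ℝ) : ∫ y in (-π)..π, F (σ + y * I) =
      (2 * π : ℂ) • Complex.exp (-k * σ) • fourierCoef f σ k := by
    rw [smul_comm, ← integral_exp_smul_eq_fourierCoef, ← intervalIntegral.integral_smul]
    refine intervalIntegral.integral_congr fun y _ => ?_
    simp only [F, smul_smul, ← Complex.exp_add]
    ring_nf
  have hmem : ∀ x ∈ [[θ, s]], x ∈ Ioo (0 : ℝ) 1 := ordConnected_Ioo.uIcc_subset hθ hs
  have hdiff : DifferentiableOn ℂ F ([[θ, s]] ×ℂ [[-π, π]]) := fun p hp =>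
    ((differentiableAt_id.const_mul _).cexp.smul (hf p (hmem _ hp.1))).differentiableWithinAt
  have hhor (x : ℝ) (hx : x ∈ [[θ, s]]) : F (x + (-π : ℝ) * I) = F (x + (π : ℝ) * I) := by
    have hexp : Complex.exp (-k * (x + (-π : ℝ) * I + 2 * π * I)) =
        Complex.exp (-k * (x + (-π : ℝ) * I)) := by
      rw [mul_add, Complex.exp_add, show (-k : ℂ) = ((-k : ℤ) : ℂ) by push_cast; rfl,
        exp_int_mul_two_pi_mul_I, mul_one]
    rw [show (x : ℂ) + (π : ℝ) * I = x + (-π : ℝ) * I + 2 * π * I by push_cast; ring]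
    simp only [F, hper _ (add_mul_I_mem_openStrip (hmem x hx) (-π)), hexp]
  have hvert := integral_vertical_eq_of_eqOn_horizontal hdiff hhor
  rw [hline, hline] at hvert
  have hcoef := smul_right_injective E (by simp [pi_ne_zero] : (2 * π : ℂ) ≠ 0) hvert
  calc fourierCoef f s k
      = Complex.exp (k * s) • Complex.exp (-k * s) • fourierCoef f s k := by
        rw [smul_smul, ← Complex.exp_add]; simp
    _ = Complex.exp (k * (s - θ)) • fourierCoef f θ k := by
        rw [← hcoef, smul_smul, ← Complex.exp_add]; ring_nf

end Strip

section StripSeries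

theorem summable_exp_neg_mul_abs {δ : ℝ} (hδ : 0 < δ) :
    Summable fun k : ℤ => Real.exp (-δ * |(k : ℝ)|) := by
  have hgeom : Summable fun n : ℕ => Real.exp (-δ * n) := by
    simp_rw [mul_comm (-δ), Real.exp_nat_mul]
    exact summable_geometric_of_lt_one (Real.exp_nonneg _) (Real.exp_lt_one_iff.2 (by linarith))
  exact Summable.of_nat_of_neg (by simpa using hgeom) (by simpa using hgeom)

variable {E : Type*} [NormedAddCommGroup E] [NormedSpace ℂ E]

noncomputable def stripSeries (θ : ℝ) (x : ℤ → E) (z : ℂ) : E :=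
  ∑' k : ℤ, Complex.exp (k * (z - θ)) • x k

theorem stripSeries_add_two_pi_mul_I (θ : ℝ) (x : ℤ → E) (z : ℂ) :
    stripSeries θ x (z + 2 * π * I) = stripSeries θ x z := by
  refine tsum_congr fun k => ?_
  rw [show (k : ℂ) * (z + 2 * π * I - θ) = k * (z - θ) + k * (2 * π * I) by ring,
    Complex.exp_add, exp_int_mul_two_pi_mul_I, mul_one]

variable {θ C : ℝ} {x : ℤ → E}

theorem StripBound.norm_exp_smul_le (hx : StripBound θ C x) {δ : ℝ} {w : ℂ}
    (hδw : δ ≤ w.re) (hwδ : w.re ≤ 1 - δ) (k : ℤ) :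
    ‖Complex.exp (k * (w - θ)) • x k‖ ≤ C * Real.exp (-δ * |(k : ℝ)|) := by
  rw [norm_smul, Complex.norm_exp, show (k * (w - θ)).re = k * (w.re - θ) by simp]
  rcases le_or_gt 0 k with hk | hk
  · have hk' : (0 : ℝ) ≤ k := by exact_mod_cast hk
    calc Real.exp (k * (w.re - θ)) * ‖x k‖
        ≤ Real.exp (k * (w.re - θ)) * (C * Real.exp ((θ - 1) * k)) := by gcongr; exact (hx k).2
      _ = C * Real.exp (k * (w.re - 1)) := by rw [mul_left_comm, ← Real.exp_add]; ring_nf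
      _ ≤ C * Real.exp (-δ * |(k : ℝ)|) :=
        mul_le_mul_of_nonneg_left (Real.exp_le_exp.2 (by rw [abs_of_nonneg hk']; nlinarith))
          hx.nonneg
  · have hk' : (k : ℝ) < 0 := by exact_mod_cast hk
    calc Real.exp (k * (w.re - θ)) * ‖x k‖
        ≤ Real.exp (k * (w.re - θ)) * (C * Real.exp (θ * k)) := by gcongr; exact (hx k).1
      _ = C * Real.exp (k * w.re) := by rw [mul_left_comm, ← Real.exp_add]; ring_nf
      _ ≤ C * Real.exp (-δ * |(k : ℝ)|) :=
        mul_le_mul_of_nonneg_left (Real.exp_le_exp.2 (by rw [abs_of_neg hk']; nlinarith))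
          hx.nonneg

variable [CompleteSpace E]

theorem StripBound.hasSum_stripSeries (hx : StripBound θ C x) {z : ℂ} (hz : z ∈ openStrip) :
    HasSum (fun k : ℤ => Complex.exp (k * (z - θ)) • x k) (stripSeries θ x z) := by
  obtain ⟨δ, hδ, hδz, hzδ⟩ := exists_pos_lt_re_lt hz
  exact (((summable_exp_neg_mul_abs hδ).mul_left C).of_norm_bounded
    (hx.norm_exp_smul_le hδz.le hzδ.le)).hasSum

theorem StripBound.differentiableAt_stripSeries (hx : StripBound θ C x) {z : ℂ}
    (hz : z ∈ openStrip) : DifferentiableAt ℂ (stripSeries θ x) z := by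
  obtain ⟨δ, hδ, hδz, hzδ⟩ := exists_pos_lt_re_lt hz
  have hU : IsOpen {w : ℂ | δ < w.re ∧ w.re < 1 - δ} :=
    (isOpen_lt continuous_const continuous_re).inter (isOpen_lt continuous_re continuous_const)
  refine (differentiableOn_tsum_of_summable_norm ((summable_exp_neg_mul_abs hδ).mul_left C)
    (fun k => by fun_prop) hU fun k w hw => hx.norm_exp_smul_le hw.1.le hw.2.le k)
    |>.differentiableAt (hU.mem_nhds ⟨hδz, hzδ⟩)

theorem StripBound.fourierCoef_stripSeries (hx : StripBound θ C x) {s : ℝ} (hs : s ∈ Ioo 0 1)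
    (k : ℤ) : fourierCoef (stripSeries θ x) s k = Complex.exp (k * (s - θ)) • x k := by
  obtain ⟨δ, hδ, hδs, hsδ⟩ := exists_pos_lt_re_lt (z := s) (by simpa [mem_openStrip] using hs)
  have hc : Summable fun m : ℤ => ‖Complex.exp (m * (s - θ)) • x m‖ :=
    ((summable_exp_neg_mul_abs hδ).mul_left C).of_nonneg_of_le (fun _ => norm_nonneg _)
      (hx.norm_exp_smul_le hδs.le hsδ.le)
  have hline (t : ℝ) : stripSeries θ x (s + t * I) =
      ∑' m : ℤ, Complex.exp (m * I * t) • Complex.exp (m * (s - θ)) • x m := by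
    refine tsum_congr fun m => ?_
    rw [smul_smul, ← Complex.exp_add]
    ring_nf
  rw [fourierCoef]
  simp only [hline]
  rw [integral_exp_smul_tsum_exp_smul hc, smul_smul, inv_mul_cancel₀ (by simp [pi_ne_zero]),
    one_smul]

theorem stripSeries_fourierCoef_eq {f : ℂ → E} (hf : ∀ z ∈ openStrip, DifferentiableAt ℂ f z)
    (hper : ∀ z ∈ openStrip, f (z + 2 * π * I) = f z) (hθ : θ ∈ Ioo 0 1)
    (hC : StripBound θ C (fourierCoef f θ)) {z : ℂ} (hz : z ∈ openStrip) :
    stripSeries θ (fourierCoef f θ) z = f z := by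
  set g := stripSeries θ (fourierCoef f θ)
  have hg (w : ℂ) (hw : w ∈ openStrip) : DifferentiableAt ℂ g w :=
    hC.differentiableAt_stripSeries hw
  have hs : z.re ∈ Ioo 0 1 := hz
  have hint {F : ℂ → E} (hF : ∀ w ∈ openStrip, DifferentiableAt ℂ F w) (k : ℤ) :
      IntervalIntegrable (fun t : ℝ => Complex.exp (-k * I * t) • F (z.re + t * I))
        MeasureTheory.volume (-π) π :=
    ((by fun_prop : Continuous fun t : ℝ => Complex.exp (-k * I * t)).smul
      (continuous_comp_add_mul_I hF hs)).intervalIntegrable _ _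
  have hper_line (t : ℝ) : (z.re : ℂ) + ((t + 2 * π : ℝ) : ℂ) * I = z.re + t * I + 2 * π * I := by
    push_cast; ring
  have hu := eq_zero_of_forall_integral_exp_smul_eq_zero
    (u := fun t : ℝ => f (z.re + t * I) - g (z.re + t * I))
    ((continuous_comp_add_mul_I hf hs).sub (continuous_comp_add_mul_I hg hs))
    (fun t => by
      simp only [hper_line, hper _ (add_mul_I_mem_openStrip hs t), g,
        stripSeries_add_two_pi_mul_I])
    (fun k => by
      simp only [smul_sub]
      rw [intervalIntegral.integral_sub (hint hf k) (hint hg k),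
        integral_exp_smul_eq_fourierCoef, integral_exp_smul_eq_fourierCoef,
        hC.fourierCoef_stripSeries hs, fourierCoef_eq_exp_smul_fourierCoef hf hper hs hθ,
        sub_self])
    z.im
  rwa [sub_eq_zero, re_add_im, eq_comm] at hu

end StripSeries

/-- The map `f ↦ f̂_θ` is an isometric isomorphism from
`ℋ_π(𝕊;𝒳₀,𝒳₁)` onto `𝔖₀(e^{-θ}) ∩ 𝔖₁(e^{1-θ})`, with inverse
`x⃗ ↦ (z ↦ ∑_k e^{k(z-θ)} x_k)`.  Since the `ℋ_π(𝕊;𝒳₀,𝒳₁)`-norm of `f` is by definition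
the `𝔖₀(e^{-θ}) ∩ 𝔖₁(e^{1-θ})`-norm of `f̂_θ`, the content is: every
`f ∈ ℋ_π(𝕊;𝒳₀,𝒳₁)` is recovered from `f̂_θ` by the inverse formula, and every
`x⃗ ∈ 𝔖₀(e^{-θ}) ∩ 𝔖₁(e^{1-θ})` arises as `ĝ_θ` for the (analytic, `2πi`-periodic)
function `g(z) = ∑_k e^{k(z-θ)} x_k`. -/
theorem statement13 {E : Type u} [NormedAddCommGroup E] [NormedSpace ℂ E] [CompleteSpace E]
    (N₀ N₁ : BanachENorm ℂ E)
    (hcomp : ∀ v : E, enSum N₀.toFun N₁.toFun v = (‖v‖₊ : ℝ≥0∞))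
    (S₀ : SeqStructure ℂ E N₀) (S₁ : SeqStructure ℂ E N₁)
    (θ : ℝ) (hθ : θ ∈ Set.Ioo (0 : ℝ) 1) :
    (∀ f : ℂ → E, (∀ z ∈ openStrip, DifferentiableAt ℂ f z) →
      (∀ z ∈ openStrip, f (z + 2 * (Real.pi : ℂ) * Complex.I) = f z) →
      max (wtSeq (Real.exp (-θ)) S₀.toFun (fourierCoef f θ))
          (wtSeq (Real.exp (1 - θ)) S₁.toFun (fourierCoef f θ)) ≠ ∞ →
      ∀ z ∈ openStrip,
        HasSum (fun k : ℤ =>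
          Complex.exp ((k : ℂ) * (z - (θ : ℂ))) • fourierCoef f θ k) (f z)) ∧
    (∀ x : ℤ → E,
      max (wtSeq (Real.exp (-θ)) S₀.toFun x) (wtSeq (Real.exp (1 - θ)) S₁.toFun x) ≠ ∞ →
      ∃ g : ℂ → E,
        (∀ z ∈ openStrip,
          HasSum (fun k : ℤ => Complex.exp ((k : ℂ) * (z - (θ : ℂ))) • x k) (g z)) ∧
        (∀ z ∈ openStrip, DifferentiableAt ℂ g z) ∧
        (∀ z ∈ openStrip, g (z + 2 * (Real.pi : ℂ) * Complex.I) = g z) ∧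
        (∀ k : ℤ, fourierCoef g θ k = x k)) := by
  have hN₀ (v : E) : (‖v‖₊ : ℝ≥0∞) ≤ N₀.toFun v := hcomp v ▸ enSum_le_left N₁.toFun_zero v
  have hN₁ (v : E) : (‖v‖₊ : ℝ≥0∞) ≤ N₁.toFun v := hcomp v ▸ enSum_le_right N₀.toFun_zero v
  refine ⟨fun f hf hper hfin z hz => ?_, fun x hfin => ?_⟩
  · obtain ⟨C, hC⟩ := S₀.exists_stripBound S₁ hN₀ hN₁ hfin
    rw [← stripSeries_fourierCoef_eq hf hper hθ hC hz]
    exact hC.hasSum_stripSeries hz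
  · obtain ⟨C, hC⟩ := S₀.exists_stripBound S₁ hN₀ hN₁ hfin
    refine ⟨stripSeries θ x, fun z hz => hC.hasSum_stripSeries hz,
      fun z hz => hC.differentiableAt_stripSeries hz,
      fun z _ => stripSeries_add_two_pi_mul_I θ x z, fun k => ?_⟩
    rw [hC.fourierCoef_stripSeries hθ, sub_self, mul_zero, Complex.exp_zero, one_smul]
end

section
/- Let (𝒳₀,𝒳₁) be a compatible couple of sequentially structured Banach spaces and let θ ∈ (0,1). For every x ∈ X₀+X₁: ‖x‖_{(𝒳₀,𝒳₁)_θ} = inf{ ‖f‖_{ℋ_π(𝕊;𝒳₀,𝒳₁)} : f ∈ ℋ_π(𝕊;𝒳₀,𝒳₁), f(θ) = x }. -/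
open scoped ENNReal NNReal
open Filter Topology

universe u v

section Statement14Aux

open Complex MeasureTheory

lemma real_exp_zpow (r : ℝ) (k : ℤ) : Real.exp r ^ k = Real.exp (r * k) := by
  obtain ⟨n, rfl | rfl⟩ := k.eq_nat_or_neg
  · rw [zpow_natCast, ← Real.exp_nat_mul, mul_comm]
    norm_num
  · rw [zpow_neg, zpow_natCast, ← Real.exp_nat_mul, ← Real.exp_neg]
    push_cast
    ring_nf

lemma summable_exp_if {c d : ℝ} (hc : 0 < c) (hd : d < 0) :
    Summable (fun m : ℤ => if 0 ≤ m then Real.exp (d * m) else Real.exp (c * m)) := by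
  apply Summable.of_nat_of_neg
  · apply Summable.of_nonneg_of_le (fun n => by positivity) (fun n => ?_)
      (summable_geometric_of_lt_one (Real.exp_pos d).le (Real.exp_lt_one_iff.mpr hd))
    rw [if_pos (by exact_mod_cast Int.ofNat_nonneg n)]
    rw [← Real.exp_nat_mul]
    push_cast
    rw [mul_comm]
  · apply Summable.of_nonneg_of_le (fun n => by positivity) (fun n => ?_)
      (summable_geometric_of_lt_one (Real.exp_pos (-c)).le
        (Real.exp_lt_one_iff.mpr (by linarith)))
    rcases Nat.eq_zero_or_pos n with rfl | hn
    · simp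
    · rw [if_neg (by omega), ← Real.exp_nat_mul]
      apply le_of_eq
      congr 1
      push_cast
      ring

lemma summable_min_exp {θ : ℝ} (hθ0 : 0 < θ) (hθ1 : θ < 1) :
    Summable (fun k : ℤ => min (Real.exp (θ * k)) (Real.exp ((θ - 1) * k))) := by
  apply Summable.of_nonneg_of_le (fun k => by positivity) (fun k => ?_)
    (summable_exp_if hθ0 (by linarith : θ - 1 < 0))
  rcases le_or_gt 0 k with hk | hk
  · rw [if_pos hk]; exact min_le_right _ _
  · rw [if_neg (not_le.mpr hk)]; exact min_le_left _ _

variable {E : Type u} [NormedAddCommGroup E] [NormedSpace ℂ E]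

lemma nn_le_of_hcomp {N₀ N₁ : BanachENorm ℂ E}
    (hcomp : ∀ v : E, enSum N₀.toFun N₁.toFun v = (‖v‖₊ : ℝ≥0∞)) :
    (∀ v : E, (‖v‖₊ : ℝ≥0∞) ≤ N₀.toFun v) ∧ (∀ v : E, (‖v‖₊ : ℝ≥0∞) ≤ N₁.toFun v) := by
  have h0 : N₀.toFun 0 = 0 := by
    have h := N₀.isBanachENorm.2.2.1 0 0
    simp only [smul_zero, nnnorm_zero, ENNReal.coe_zero, zero_mul] at h
    exact le_antisymm h zero_le
  have h1 : N₁.toFun 0 = 0 := by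
    have h := N₁.isBanachENorm.2.2.1 0 0
    simp only [smul_zero, nnnorm_zero, ENNReal.coe_zero, zero_mul] at h
    exact le_antisymm h zero_le
  constructor
  · intro v
    rw [← hcomp v]
    refine le_trans (iInf_le _ v) ?_
    simp [h1]
  · intro v
    rw [← hcomp v]
    refine le_trans (iInf_le _ 0) ?_
    simp [h0]

lemma coord_norm_le {N : BanachENorm ℂ E} (hN : ∀ v : E, (‖v‖₊ : ℝ≥0∞) ≤ N.toFun v)
    (S : SeqStructure ℂ E N) {a : ℝ} (ha : 0 < a) (x : ℤ → E) {M : ℝ≥0∞}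
    (hM : wtSeq a S.toFun x ≤ M) (hMt : M ≠ ⊤) (k : ℤ) :
    ‖x k‖ ≤ (a ^ k)⁻¹ * M.toReal := by
  have hak : (0:ℝ) < a ^ k := zpow_pos ha k
  have h1 : (‖(a ^ k) • x k‖₊ : ℝ≥0∞) ≤ M :=
    le_trans (le_trans (hN _) (S.coord (fun k => (a ^ k) • x k) k)) hM
  have h2 : ‖(a ^ k) • x k‖ ≤ M.toReal := by
    have := ENNReal.toReal_mono hMt h1
    simpa using this
  rw [norm_smul, Real.norm_eq_abs, abs_of_pos hak] at h2
  calc ‖x k‖ = (a ^ k)⁻¹ * (a ^ k * ‖x k‖) := by field_simp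
    _ ≤ (a ^ k)⁻¹ * M.toReal := by gcongr

lemma bounds_of_max {N₀ N₁ : BanachENorm ℂ E}
    (hN₀ : ∀ v : E, (‖v‖₊ : ℝ≥0∞) ≤ N₀.toFun v) (hN₁ : ∀ v : E, (‖v‖₊ : ℝ≥0∞) ≤ N₁.toFun v)
    (S₀ : SeqStructure ℂ E N₀) (S₁ : SeqStructure ℂ E N₁) {θ : ℝ} (x : ℤ → E) {M : ℝ≥0∞}
    (h₀ : wtSeq (Real.exp (-θ)) S₀.toFun x ≤ M)
    (h₁ : wtSeq (Real.exp (1 - θ)) S₁.toFun x ≤ M) (hMt : M ≠ ⊤) (k : ℤ) :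
    ‖x k‖ ≤ M.toReal * min (Real.exp (θ * k)) (Real.exp ((θ - 1) * k)) := by
  have b0 := coord_norm_le hN₀ S₀ (Real.exp_pos (-θ)) x h₀ hMt k
  have b1 := coord_norm_le hN₁ S₁ (Real.exp_pos (1 - θ)) x h₁ hMt k
  rw [real_exp_zpow, ← Real.exp_neg] at b0 b1
  have e0 : -(-θ * k) = θ * k := by ring
  have e1 : -((1 - θ) * k) = (θ - 1) * k := by ring
  rw [e0] at b0
  rw [e1] at b1
  rw [mul_min_of_nonneg _ _ ENNReal.toReal_nonneg, le_min_iff]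
  constructor
  · rw [mul_comm]; exact b0
  · rw [mul_comm]; exact b1


variable [CompleteSpace E]

/-- The analytic function attached to a decomposition `x⃗`. -/
noncomputable def stripFun (θ : ℝ) (x : ℤ → E) (z : ℂ) : E :=
  ∑' m : ℤ, Complex.exp ((z - (θ : ℂ)) * (m : ℂ)) • x m

lemma strip_term_bound {x : ℤ → E} {C θ : ℝ}
    (hx : ∀ k : ℤ, ‖x k‖ ≤ C * min (Real.exp (θ * k)) (Real.exp ((θ - 1) * k)))
    (hC : 0 ≤ C) {a b : ℝ} (m : ℤ) (w : ℂ) (hw1 : a ≤ w.re) (hw2 : w.re ≤ b) :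
    ‖Complex.exp ((w - (θ : ℂ)) * (m : ℂ)) • x m‖ ≤
      C * (if 0 ≤ m then Real.exp ((b - 1) * m) else Real.exp (a * m)) := by
  rw [norm_smul, Complex.norm_exp]
  have hre : ((w - (θ : ℂ)) * (m : ℂ)).re = (w.re - θ) * (m : ℝ) := by
    simp [Complex.sub_re, Complex.mul_re]
  rw [hre]
  rcases le_or_gt 0 m with hm | hm
  · have hm' : (0:ℝ) ≤ (m : ℝ) := by exact_mod_cast hm
    rw [if_pos hm]
    calc Real.exp ((w.re - θ) * m) * ‖x m‖
        ≤ Real.exp ((w.re - θ) * m) * (C * Real.exp ((θ - 1) * m)) := by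
          gcongr
          exact le_trans (hx m) (by gcongr; exact min_le_right _ _)
      _ = C * Real.exp ((w.re - 1) * m) := by
          rw [mul_comm (Real.exp _) _, mul_assoc, ← Real.exp_add]
          ring_nf
      _ ≤ C * Real.exp ((b - 1) * m) := by
          apply mul_le_mul_of_nonneg_left _ hC
          exact Real.exp_le_exp.mpr (mul_le_mul_of_nonneg_right (by linarith) hm')
  · have hm' : (m : ℝ) ≤ 0 := by exact_mod_cast hm.le
    rw [if_neg (not_le.mpr hm)]
    calc Real.exp ((w.re - θ) * m) * ‖x m‖
        ≤ Real.exp ((w.re - θ) * m) * (C * Real.exp (θ * m)) := by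
          gcongr
          exact le_trans (hx m) (by gcongr; exact min_le_left _ _)
      _ = C * Real.exp (w.re * m) := by
          rw [mul_comm (Real.exp _) _, mul_assoc, ← Real.exp_add]
          ring_nf
      _ ≤ C * Real.exp (a * m) := by
          apply mul_le_mul_of_nonneg_left _ hC
          exact Real.exp_le_exp.mpr (mul_le_mul_of_nonpos_right hw1 hm')

lemma stripFun_differentiableAt {x : ℤ → E} {C θ : ℝ}
    (hx : ∀ k : ℤ, ‖x k‖ ≤ C * min (Real.exp (θ * k)) (Real.exp ((θ - 1) * k)))
    (hC : 0 ≤ C) {z : ℂ} (hz : z ∈ openStrip) :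
    DifferentiableAt ℂ (stripFun θ x) z := by
  obtain ⟨hz0, hz1⟩ := hz
  set a : ℝ := z.re / 2 with ha_def
  set b : ℝ := (z.re + 1) / 2 with hb_def
  have ha : 0 < a := by simp only [ha_def]; linarith
  have hb : b < 1 := by simp only [hb_def]; linarith
  set U : Set ℂ := Complex.re ⁻¹' Set.Ioo a b with hU_def
  have hUopen : IsOpen U := isOpen_Ioo.preimage Complex.continuous_re
  have hd : DifferentiableOn ℂ
      (fun w => ∑' m : ℤ, Complex.exp ((w - (θ : ℂ)) * (m : ℂ)) • x m) U := by
    apply differentiableOn_tsum_of_summable_norm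
      ((summable_exp_if ha (by linarith : b - 1 < 0)).mul_left C)
    · intro m
      exact (((differentiable_id.sub_const ((θ : ℂ))).mul_const
        ((m : ℂ))).cexp.smul_const (x m)).differentiableOn
    · exact hUopen
    · intro m w hw
      exact strip_term_bound hx hC m w hw.1.le hw.2.le
  have hmem : z ∈ U := by
    constructor <;> [skip; skip] <;> simp only [ha_def, hb_def] <;> linarith
  exact hd.differentiableAt (hUopen.mem_nhds hmem)

lemma stripFun_periodic (θ : ℝ) (x : ℤ → E) (z : ℂ) :
    stripFun θ x (z + 2 * (Real.pi : ℂ) * Complex.I) = stripFun θ x z := by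
  unfold stripFun
  apply tsum_congr
  intro m
  congr 1
  rw [show (z + 2 * (Real.pi : ℂ) * Complex.I - (θ : ℂ)) * (m : ℂ)
      = (z - (θ : ℂ)) * (m : ℂ) + (m : ℂ) * (2 * (Real.pi : ℂ) * Complex.I) by ring,
    Complex.exp_add, Complex.exp_int_mul_two_pi_mul_I, mul_one]

lemma stripFun_apply_base (θ : ℝ) (x : ℤ → E) {v : E} (hv : HasSum x v) :
    stripFun θ x (θ : ℂ) = v := by
  unfold stripFun
  have : ∀ m : ℤ, Complex.exp (((θ : ℂ) - (θ : ℂ)) * (m : ℂ)) • x m = x m := by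
    intro m
    rw [sub_self, zero_mul, Complex.exp_zero, one_smul]
  rw [tsum_congr this, hv.tsum_eq]


lemma integral_exp_int (n : ℤ) :
    (∫ t : ℝ in (-Real.pi)..Real.pi, Complex.exp (Complex.I * (t : ℂ) * (n : ℂ)))
      = if n = 0 then (2 * (Real.pi : ℂ)) else 0 := by
  rcases eq_or_ne n 0 with rfl | hn
  · simp only [Int.cast_zero, mul_zero, Complex.exp_zero, if_pos rfl]
    rw [intervalIntegral.integral_const]
    rw [Complex.real_smul]
    push_cast
    ring
  · rw [if_neg hn]
    have h1 : ∀ t : ℝ, Complex.I * (t : ℂ) * (n : ℂ) = (Complex.I * (n : ℂ)) * (t : ℂ) := by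
      intro t; ring
    simp_rw [h1]
    rw [integral_exp_mul_complex
      (mul_ne_zero Complex.I_ne_zero (Int.cast_ne_zero.mpr hn))]
    have h2 : Complex.exp (Complex.I * (n : ℂ) * ((Real.pi : ℝ) : ℂ))
        = Complex.exp (Complex.I * (n : ℂ) * ((-Real.pi : ℝ) : ℂ)) := by
      rw [show (Complex.I * (n : ℂ) * ((Real.pi : ℝ) : ℂ))
          = Complex.I * (n : ℂ) * ((-Real.pi : ℝ) : ℂ) + (n : ℂ) * (2 * (Real.pi : ℂ) * Complex.I)
          by push_cast; ring, Complex.exp_add, Complex.exp_int_mul_two_pi_mul_I, mul_one]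
    rw [h2, sub_self, zero_div]

lemma fourierCoef_stripFun {x : ℤ → E} {C θ : ℝ}
    (hθ0 : 0 < θ) (hθ1 : θ < 1)
    (hx : ∀ k : ℤ, ‖x k‖ ≤ C * min (Real.exp (θ * k)) (Real.exp ((θ - 1) * k)))
    (k : ℤ) : fourierCoef (stripFun θ x) θ k = x k := by
  have hsx : Summable (fun m : ℤ => ‖x m‖) :=
    Summable.of_nonneg_of_le (fun m => norm_nonneg _) hx
      ((summable_min_exp hθ0 hθ1).mul_left C)
  have key : ∀ t : ℝ, Complex.exp (-(k : ℂ) * Complex.I * (t : ℂ)) •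
      stripFun θ x ((θ : ℂ) + (t : ℂ) * Complex.I)
      = ∑' m : ℤ, Complex.exp (Complex.I * (t : ℂ) * ((m - k : ℤ) : ℂ)) • x m := by
    intro t
    have h1 : Summable (fun m : ℤ =>
        Complex.exp (((θ : ℂ) + (t : ℂ) * Complex.I - (θ : ℂ)) * (m : ℂ)) • x m) := by
      apply Summable.of_norm
      have : ∀ m : ℤ, ‖Complex.exp (((θ : ℂ) + (t : ℂ) * Complex.I - (θ : ℂ)) * (m : ℂ)) • x m‖
          = ‖x m‖ := by
        intro m
        rw [norm_smul, Complex.norm_exp]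
        have : ((((θ : ℂ) + (t : ℂ) * Complex.I - (θ : ℂ)) * (m : ℂ))).re = 0 := by
          simp [Complex.add_re, Complex.sub_re, Complex.mul_re]
        rw [this, Real.exp_zero, one_mul]
      rw [summable_congr this]
      exact hsx
    unfold stripFun
    rw [← (h1.hasSum.const_smul (Complex.exp (-(k : ℂ) * Complex.I * (t : ℂ)))).tsum_eq]
    apply tsum_congr
    intro m
    rw [smul_smul, ← Complex.exp_add]
    congr 1
    push_cast
    ring
  unfold fourierCoef
  simp_rw [key]
  have hπ : (-Real.pi) ≤ Real.pi := by linarith [Real.pi_pos]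
  have hcont : ∀ m : ℤ, Continuous (fun t : ℝ =>
      Complex.exp (Complex.I * (t : ℂ) * ((m - k : ℤ) : ℂ)) • x m) := by
    intro m
    exact (Complex.continuous_exp.comp
      ((continuous_const.mul Complex.continuous_ofReal).mul continuous_const)).smul
      continuous_const
  have hnorm : ∀ m : ℤ, ∀ t : ℝ,
      ‖Complex.exp (Complex.I * (t : ℂ) * ((m - k : ℤ) : ℂ)) • x m‖ = ‖x m‖ := by
    intro m t
    rw [norm_smul, Complex.norm_exp]
    have : (Complex.I * (t : ℂ) * ((m - k : ℤ) : ℂ)).re = 0 := by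
      simp [Complex.mul_re]
    rw [this, Real.exp_zero, one_mul]
  have hswap : (∫ t : ℝ in (-Real.pi)..Real.pi,
      ∑' m : ℤ, Complex.exp (Complex.I * (t : ℂ) * ((m - k : ℤ) : ℂ)) • x m)
      = ∑' m : ℤ, ∫ t : ℝ in (-Real.pi)..Real.pi,
          Complex.exp (Complex.I * (t : ℂ) * ((m - k : ℤ) : ℂ)) • x m := by
    rw [intervalIntegral.integral_of_le hπ]
    rw [← MeasureTheory.integral_tsum_of_summable_integral_norm
      (fun m => (hcont m).integrableOn_Ioc) ?_]
    · apply tsum_congr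
      intro m
      rw [intervalIntegral.integral_of_le hπ]
    · have : ∀ m : ℤ, (∫ t in Set.Ioc (-Real.pi) Real.pi,
          ‖Complex.exp (Complex.I * (t : ℂ) * ((m - k : ℤ) : ℂ)) • x m‖)
          = (2 * Real.pi) * ‖x m‖ := by
        intro m
        rw [MeasureTheory.setIntegral_congr_fun measurableSet_Ioc
          (fun t _ => hnorm m t)]
        rw [MeasureTheory.setIntegral_const, Real.volume_real_Ioc_of_le hπ]
        rw [smul_eq_mul]
        ring_nf
      rw [summable_congr this]
      exact hsx.mul_left _
  rw [hswap]
  have hterm : ∀ m : ℤ, (∫ t : ℝ in (-Real.pi)..Real.pi,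
      Complex.exp (Complex.I * (t : ℂ) * ((m - k : ℤ) : ℂ)) • x m)
      = (if m = k then (2 * (Real.pi : ℂ)) else 0) • x m := by
    intro m
    rw [intervalIntegral.integral_smul_const, integral_exp_int]
    congr 1
    simp [sub_eq_zero]
  rw [tsum_congr hterm]
  rw [tsum_eq_single k (fun m hm => by rw [if_neg hm, zero_smul])]
  rw [if_pos rfl, smul_smul, inv_mul_cancel₀ (by
    simp [Real.pi_ne_zero] : (2 * (Real.pi : ℂ)) ≠ 0), one_smul]


lemma hasSum_fourierCoef {f : ℂ → E} {θ : ℝ} (hθ0 : 0 < θ) (hθ1 : θ < 1)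
    (hdiff : ∀ z ∈ openStrip, DifferentiableAt ℂ f z)
    (hper : ∀ z ∈ openStrip, f (z + 2 * (Real.pi : ℂ) * Complex.I) = f z)
    (hsx : Summable fun k : ℤ => ‖fourierCoef f θ k‖) :
    HasSum (fourierCoef f θ) (f (θ : ℂ)) := by
  haveI : Fact (0 < 2 * Real.pi) := ⟨by linarith [Real.pi_pos]⟩
  have hmem : ∀ t : ℝ, ((θ : ℂ) + (t : ℂ) * Complex.I) ∈ openStrip := by
    intro t
    constructor <;> simp [Complex.add_re, Complex.mul_re] <;> linarith
  set g : ℝ → E := fun t => f ((θ : ℂ) + (t : ℂ) * Complex.I) with hg_def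
  have hgc : Continuous g := by
    rw [continuous_iff_continuousAt]
    intro t
    have hinner : Continuous (fun t : ℝ => (θ : ℂ) + (t : ℂ) * Complex.I) :=
      continuous_const.add (Complex.continuous_ofReal.mul continuous_const)
    exact ContinuousAt.comp (g := f) (f := fun t : ℝ => (θ : ℂ) + (t : ℂ) * Complex.I)
      ((hdiff _ (hmem t)).continuousAt) hinner.continuousAt
  have hgp : Function.Periodic g (2 * Real.pi) := by
    intro t
    simp only [hg_def]
    rw [← hper _ (hmem t)]
    congr 1
    push_cast
    ring
  have hint : ∀ k : ℤ, IntervalIntegrable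
      (fun t : ℝ => Complex.exp (-(k : ℂ) * Complex.I * (t : ℂ)) • g t)
      MeasureTheory.volume (-Real.pi) Real.pi := by
    intro k
    apply Continuous.intervalIntegrable
    exact (Complex.continuous_exp.comp
      ((continuous_const.mul Complex.continuous_ofReal))).smul hgc
  have hx : Summable (fourierCoef f θ) := hsx.of_norm
  obtain ⟨s, hs⟩ := hx
  suffices hsv : s = f (θ : ℂ) by rwa [hsv] at hs
  rw [NormedSpace.eq_iff_forall_dual_eq ℂ]
  intro φ
  set h : ℝ → ℂ := fun t => φ (g t) with hh_def
  have hhp : Function.Periodic h (2 * Real.pi) := fun t => by simp [hh_def, hgp t]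
  have hcont : Continuous hhp.lift := by
    rw [(QuotientAddGroup.isQuotientMap_mk _).continuous_iff]
    have : hhp.lift ∘ (QuotientAddGroup.mk : ℝ → AddCircle (2 * Real.pi)) = h :=
      funext fun t => hhp.lift_coe t
    rw [this]
    exact φ.continuous.comp hgc
  set hAC : C(AddCircle (2 * Real.pi), ℂ) := ⟨hhp.lift, hcont⟩ with hhAC_def
  have hcoeff : ∀ k : ℤ, fourierCoeff (⇑hAC) k = φ (fourierCoef f θ k) := by
    intro k
    rw [fourierCoeff_eq_intervalIntegral _ k (-Real.pi)]
    have hφ : φ (fourierCoef f θ k) = (2 * (Real.pi : ℂ))⁻¹ *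
        ∫ t : ℝ in (-Real.pi)..Real.pi,
          Complex.exp (-(k : ℂ) * Complex.I * (t : ℂ)) * φ (g t) := by
      unfold fourierCoef
      rw [φ.map_smul, smul_eq_mul]
      congr 1
      rw [← ContinuousLinearMap.intervalIntegral_comp_comm φ (hint k)]
      congr 1
      funext t
      rw [φ.map_smul, smul_eq_mul]
    rw [hφ]
    rw [show (-Real.pi + 2 * Real.pi) = Real.pi by ring]
    have hker : ∀ t : ℝ, (fourier (-k) ((t : ℝ) : AddCircle (2 * Real.pi)) : ℂ) •
        (hAC ((t : ℝ) : AddCircle (2 * Real.pi)))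
        = Complex.exp (-(k : ℂ) * Complex.I * (t : ℂ)) * φ (g t) := by
      intro t
      have hhACt : hAC ((t : ℝ) : AddCircle (2 * Real.pi)) = h t := hhp.lift_coe t
      rw [hhACt, fourier_coe_apply, smul_eq_mul]
      congr 1
      congr 1
      have h2π : ((2 * Real.pi : ℝ) : ℂ) ≠ 0 := by
        simp [Real.pi_ne_zero]
      rw [div_eq_iff h2π]
      push_cast
      ring
    simp_rw [hker]
    rw [Complex.real_smul]
    congr 1
    push_cast
    rw [one_div]
  have hsum2 : Summable (fourierCoeff (⇑hAC)) := by
    apply Summable.of_norm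
    apply Summable.of_nonneg_of_le (fun _ => norm_nonneg _) (fun k => ?_) (hsx.mul_left ‖φ‖)
    rw [hcoeff k]
    exact φ.le_opNorm _
  have hps := has_pointwise_sum_fourier_series_of_summable hsum2 (0 : AddCircle (2 * Real.pi))
  simp only [fourier_eval_zero, smul_eq_mul, mul_one] at hps
  have h0 : hAC 0 = φ (f (θ : ℂ)) := by
    have hz : (((0 : ℝ)) : AddCircle (2 * Real.pi)) = 0 := by norm_cast
    rw [← hz]
    rw [show hAC (((0 : ℝ)) : AddCircle (2 * Real.pi)) = h 0 from hhp.lift_coe 0]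
    simp [hh_def, hg_def]
  rw [h0] at hps
  simp_rw [hcoeff] at hps
  exact (hs.mapL φ).unique hps

end Statement14Aux

/-- complex formulation. For every `x ∈ X₀ + X₁`,
`‖x‖_{(𝒳₀,𝒳₁)_θ} = inf {‖f‖_{ℋ_π(𝕊;𝒳₀,𝒳₁)} : f ∈ ℋ_π(𝕊;𝒳₀,𝒳₁), f(θ) = x}`, where the
`ℋ_π(𝕊;𝒳₀,𝒳₁)`-norm of an analytic `2πi`-periodic `f : 𝕊 → X₀+X₁` is
`max_{j} ‖f̂_θ‖_{𝔖_j(e^{j-θ})}`. -/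
theorem statement14 {E : Type u} [NormedAddCommGroup E] [NormedSpace ℂ E] [CompleteSpace E]
    (N₀ N₁ : BanachENorm ℂ E)
    (hcomp : ∀ v : E, enSum N₀.toFun N₁.toFun v = (‖v‖₊ : ℝ≥0∞))
    (S₀ : SeqStructure ℂ E N₀) (S₁ : SeqStructure ℂ E N₁)
    (θ : ℝ) (hθ : θ ∈ Set.Ioo (0 : ℝ) 1) :
    ∀ v : E,
      interpENorm S₀.toFun S₁.toFun θ v =
        ⨅ (f : ℂ → E) (_ : ∀ z ∈ openStrip, DifferentiableAt ℂ f z)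
          (_ : ∀ z ∈ openStrip, f (z + 2 * (Real.pi : ℂ) * Complex.I) = f z)
          (_ : f (θ : ℂ) = v),
          max (wtSeq (Real.exp (-θ)) S₀.toFun (fourierCoef f θ))
            (wtSeq (Real.exp (1 - θ)) S₁.toFun (fourierCoef f θ))  := by
  obtain ⟨hN₀, hN₁⟩ := nn_le_of_hcomp hcomp
  obtain ⟨hθ0, hθ1⟩ := hθ
  intro v
  apply le_antisymm
  · refine le_iInf fun f => le_iInf fun hdiff => le_iInf fun hper => le_iInf fun hfv => ?_
    by_cases hM : max (wtSeq (Real.exp (-θ)) S₀.toFun (fourierCoef f θ))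
        (wtSeq (Real.exp (1 - θ)) S₁.toFun (fourierCoef f θ)) = ⊤
    · rw [hM]; exact le_top
    · have hx := fun k => bounds_of_max hN₀ hN₁ S₀ S₁ (fourierCoef f θ)
        (le_max_left _ _) (le_max_right _ _) hM k
      have hsx : Summable (fun k : ℤ => ‖fourierCoef f θ k‖) :=
        Summable.of_nonneg_of_le (fun _ => norm_nonneg _) hx
          ((summable_min_exp hθ0 hθ1).mul_left _)
      have hs : HasSum (fourierCoef f θ) v := by
        have := hasSum_fourierCoef hθ0 hθ1 hdiff hper hsx
        rwa [hfv] at this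
      exact iInf₂_le (fourierCoef f θ) hs
  · refine le_iInf fun x => le_iInf fun hs => ?_
    by_cases hM : max (wtSeq (Real.exp (-θ)) S₀.toFun x)
        (wtSeq (Real.exp (1 - θ)) S₁.toFun x) = ⊤
    · rw [hM]; exact le_top
    · have hx := fun k => bounds_of_max hN₀ hN₁ S₀ S₁ x
        (le_max_left _ _) (le_max_right _ _) hM k
      have hC : (0:ℝ) ≤ (max (wtSeq (Real.exp (-θ)) S₀.toFun x)
          (wtSeq (Real.exp (1 - θ)) S₁.toFun x)).toReal := ENNReal.toReal_nonneg
      have hFc : fourierCoef (stripFun θ x) θ = x :=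
        funext (fourierCoef_stripFun hθ0 hθ1 hx)
      refine le_trans (iInf_le _ (stripFun θ x)) ?_
      refine le_trans (iInf_le _ (fun z hz => stripFun_differentiableAt hx hC hz)) ?_
      refine le_trans (iInf_le _ (fun z _ => stripFun_periodic θ x z)) ?_
      refine le_trans (iInf_le _ (stripFun_apply_base θ x hs)) ?_
      rw [hFc]
end
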